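/- arXiv:1707.07927 — 7 statements merged into one kernel-verified Lean document; each statement's English description precedes it below -/
import Mathlib

section
/- Let n ≥ 0 be an integer and let F and f be holomorphic on an open set containing the ray R := {r e^{iπ/4} : r ≥ 0}. For k ≥ 0 define φ_f^{[k+1]}(u) := (1/k!)·∫ (v−u)^k f(v) dv, the integral over the ray {u + s e^{iπ/4} : s ≥ 0}. Assume: (i) r ↦ (1+r)^{n}·|f(r e^{iπ/4})| is integrable on [0,∞); (ii) r ↦ |F(r e^{iπ/4}) f(r e^{iπ/4})| and r ↦ |F^{(n+1)}(r e^{iπ/4})·φ_f^{[n+1]}(r e^{iπ/4})| are integrable on [0,∞); (iii) for each 0 ≤ k ≤ n, F^{(k)}(u)·φ_f^{[k+1]}(u) → 0 as |u| → ∞ along R. Then ∫_R F(u) f(u) du = Σ_{k=0}^{n} F^{(k)}(0)·φ_f^{[k+1]}(0) + ∫_R F^{(n+1)}(u)·φ_f^{[n+1]}(u) du. -/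
open MeasureTheory

noncomputable section

/-- The unit direction `e^{iπ/4}`. -/
def e4 : ℂ := Complex.exp (Complex.I * (Real.pi / 4 : ℝ))

/-- The ray `{r e^{iπ/4} : r ≥ 0}`. -/
def ray : Set ℂ := {z : ℂ | ∃ r : ℝ, 0 ≤ r ∧ z = (r : ℂ) * e4}

/-- `φ_f^{[k+1]}(u) := (1/k!)·∫ (v−u)^k f(v) dv` over the ray `{u + s e^{iπ/4} : s ≥ 0}`. -/
def phiRep (f : ℂ → ℂ) (k : ℕ) (u : ℂ) : ℂ :=
  (1 / (k.factorial : ℂ)) *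
    ∫ s in Set.Ioi (0 : ℝ), e4 * (((s : ℂ) * e4) ^ k * f (u + (s : ℂ) * e4))

/-!
Along the ray put `A k r = F^{(k)}(r e^{iπ/4})` and `B k r = φ_f^{[k+1]}(r e^{iπ/4})`.
Then `A k' = e^{iπ/4} A (k+1)`, while `B 0' = -e^{iπ/4} f` and `B (k+1)' = -e^{iπ/4} B k`, so
`∑_{k ≤ n} A k B k` has derivative `e^{iπ/4} (A (n+1) B n - F f)`, and the formula is the
fundamental theorem of calculus on `[0, ∞)`, the sum tending to `0` at infinity by (iii).

`B k` is a multiple of the tail moment `∫_r^∞ (t - r)^k f(t e^{iπ/4}) dt`; its derivative follows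
by induction on `k` from `(t - r)^(k+1) = (t - r)^k t - r (t - r)^k`, applied to `f` and to `t f`.
Everything is done on a half-line `(a, ∞)`, `a < 0`, still inside the domain, so that the
derivatives at `0` are two-sided.
-/

open Set Filter Topology

def tailMoment (g : ℝ → ℂ) (k : ℕ) (r : ℝ) : ℂ :=
  ∫ t in Ioi r, ((t : ℂ) - r) ^ k * g t

def MomentsIntegrable (g : ℝ → ℂ) (k : ℕ) (a : ℝ) : Prop :=
  ∀ j ≤ k, ∀ r ∈ Ioi a, IntegrableOn (fun t : ℝ => (t : ℂ) ^ j * g t) (Ioi r)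

section TailMoment

variable {g : ℝ → ℂ} {k : ℕ} {a r : ℝ}

lemma MomentsIntegrable.mono {l : ℕ} (hg : MomentsIntegrable g k a) (hl : l ≤ k) :
    MomentsIntegrable g l a :=
  fun j hj => hg j (hj.trans hl)

lemma MomentsIntegrable.ofReal_mul (hg : MomentsIntegrable g (k + 1) a) :
    MomentsIntegrable (fun t => (t : ℂ) * g t) k a := by
  intro j hj r hr
  simpa only [pow_succ, mul_assoc] using hg (j + 1) (by omega) r hr

lemma MomentsIntegrable.integrableOn_Ioi (hg : MomentsIntegrable g 0 a) (hr : a < r) :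
    IntegrableOn g (Ioi r) := by
  simpa using hg 0 le_rfl r hr

lemma integrableOn_tailMoment (hg : MomentsIntegrable g k a) (hr : a < r) :
    IntegrableOn (fun t : ℝ => ((t : ℂ) - r) ^ k * g t) (Ioi r) := by
  induction k generalizing g with
  | zero => simpa using hg.integrableOn_Ioi hr
  | succ k ih =>
    refine ((ih hg.ofReal_mul).sub ((ih (hg.mono k.le_succ)).const_mul (r : ℂ))).congr
      (ae_of_all _ fun t => ?_)
    simp only [Pi.sub_apply]
    ring

lemma tailMoment_succ (hg : MomentsIntegrable g (k + 1) a) (hr : a < r) :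
    tailMoment g (k + 1) r =
      tailMoment (fun t => (t : ℂ) * g t) k r - r * tailMoment g k r := by
  rw [tailMoment, tailMoment, tailMoment, ← integral_const_mul,
    ← integral_sub (integrableOn_tailMoment hg.ofReal_mul hr)
      ((integrableOn_tailMoment (hg.mono k.le_succ) hr).const_mul _)]
  exact integral_congr_ae (ae_of_all _ fun t => by ring)

lemma hasDerivAt_integral_Ioi (hg : ContinuousOn g (Ioi a))
    (hint : ∀ r ∈ Ioi a, IntegrableOn g (Ioi r)) (hr : a < r) :
    HasDerivAt (fun u => ∫ t in Ioi u, g t) (-g r) r := by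
  have heq : (fun u => (∫ t in Ioi r, g t) - ∫ t in r..u, g t) =ᶠ[𝓝 r]
      fun u => ∫ t in Ioi u, g t := by
    filter_upwards [isOpen_Ioi.mem_nhds hr] with u hu
    rw [← intervalIntegral.integral_Ioi_sub_Ioi' (hint r hr) (hint u hu), sub_sub_cancel]
  have hFTC : HasDerivAt (fun u => ∫ t in r..u, g t) (g r) r :=
    intervalIntegral.integral_hasDerivAt_right IntervalIntegrable.refl
      (hg.stronglyMeasurableAtFilter isOpen_Ioi r hr) (hg.continuousAt (isOpen_Ioi.mem_nhds hr))
  simpa using (hFTC.const_sub _).congr_of_eventuallyEq heq.symm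

lemma hasDerivAt_tailMoment_zero (hc : ContinuousOn g (Ioi a)) (hg : MomentsIntegrable g 0 a)
    (hr : a < r) : HasDerivAt (tailMoment g 0) (-g r) r := by
  have h : tailMoment g 0 = fun u => ∫ t in Ioi u, g t := by ext; simp [tailMoment]
  exact h ▸ hasDerivAt_integral_Ioi hc (fun _ => hg.integrableOn_Ioi) hr

lemma tailMoment_succ_eventuallyEq (hg : MomentsIntegrable g (k + 1) a) (hr : a < r) :
    tailMoment g (k + 1) =ᶠ[𝓝 r]
      fun u => tailMoment (fun t => (t : ℂ) * g t) k u - u * tailMoment g k u := by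
  filter_upwards [isOpen_Ioi.mem_nhds hr] with u hu
  exact tailMoment_succ hg hu

lemma hasDerivAt_tailMoment_succ (hc : ContinuousOn g (Ioi a))
    (hg : MomentsIntegrable g (k + 1) a) (hr : a < r) :
    HasDerivAt (tailMoment g (k + 1)) (-((k : ℂ) + 1) * tailMoment g k r) r := by
  have hid : HasDerivAt (fun u : ℝ => (u : ℂ)) 1 r := (hasDerivAt_id r).ofReal_comp
  have hc' : ContinuousOn (fun t : ℝ => (t : ℂ) * g t) (Ioi a) :=
    Complex.continuous_ofReal.continuousOn.mul hc
  induction k generalizing g with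
  | zero =>
    have h := (hasDerivAt_tailMoment_zero hc' hg.ofReal_mul hr).sub
      (hid.mul (hasDerivAt_tailMoment_zero hc (hg.mono (by omega)) hr))
    refine (h.congr_of_eventuallyEq (tailMoment_succ_eventuallyEq hg hr)).congr_deriv ?_
    simp
  | succ k ih =>
    have h := (ih hc' hg.ofReal_mul (Complex.continuous_ofReal.continuousOn.mul hc')).sub
      (hid.mul (ih hc (hg.mono k.succ.le_succ) hc'))
    refine (h.congr_deriv ?_).congr_of_eventuallyEq (tailMoment_succ_eventuallyEq hg hr)
    rw [tailMoment_succ (hg.mono k.succ.le_succ) hr]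
    push_cast
    ring

lemma continuousOn_tailMoment (hc : ContinuousOn g (Ioi a)) (hg : MomentsIntegrable g k a) :
    ContinuousOn (tailMoment g k) (Ioi a) := by
  intro r hr
  apply ContinuousAt.continuousWithinAt
  cases k with
  | zero => exact (hasDerivAt_tailMoment_zero hc hg hr).continuousAt
  | succ k => exact (hasDerivAt_tailMoment_succ hc hg hr).continuousAt

end TailMoment

lemma hasDerivAt_sum_mul_of_chain {𝕜 𝔸 : Type*} [NontriviallyNormedField 𝕜] [NormedCommRing 𝔸]
    [NormedAlgebra 𝕜 𝔸] {A B : ℕ → 𝕜 → 𝔸} {c b : 𝔸} {x : 𝕜} (n : ℕ)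
    (hA : ∀ k ≤ n, HasDerivAt (A k) (c * A (k + 1) x) x)
    (hB₀ : HasDerivAt (B 0) (-(c * b)) x)
    (hB : ∀ k < n, HasDerivAt (B (k + 1)) (-(c * B k x)) x) :
    HasDerivAt (fun y => ∑ k ∈ Finset.range (n + 1), A k y * B k y)
      (c * (A (n + 1) x * B n x - A 0 x * b)) x := by
  induction n with
  | zero =>
    simpa using ((hA 0 le_rfl).fun_mul hB₀).congr_deriv (by ring)
  | succ n ih =>
    simp only [Finset.sum_range_succ _ (n + 1)]
    refine ((ih (fun k hk => hA k (by omega)) (fun k hk => hB k (by omega))).fun_add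
      ((hA (n + 1) le_rfl).fun_mul (hB n (by omega)))).congr_deriv ?_
    ring

lemma exists_neg_forall_ofReal_mul_mem {U : Set ℂ} (hU : IsOpen U) {w : ℂ}
    (hw : ∀ r : ℝ, 0 ≤ r → (r : ℂ) * w ∈ U) : ∃ a < (0 : ℝ), ∀ r ∈ Ioi a, (r : ℂ) * w ∈ U := by
  have hS : (fun r : ℝ => (r : ℂ) * w) ⁻¹' U ∈ 𝓝 0 :=
    (hU.preimage (by fun_prop)).mem_nhds (hw 0 le_rfl)
  obtain ⟨a, ha, hsub⟩ := exists_Ioc_subset_of_mem_nhds hS ⟨-1, by norm_num⟩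
  refine ⟨a, ha, fun r hr => ?_⟩
  rcases le_or_gt r 0 with h | h
  · exact hsub ⟨hr, h⟩
  · exact hw r h.le

lemma hasDerivAt_iteratedDeriv_ofReal_mul {F : ℂ → ℂ} {U : Set ℂ} (hU : IsOpen U)
    (hF : DifferentiableOn ℂ F U) (k : ℕ) {w : ℂ} {r : ℝ} (hr : (r : ℂ) * w ∈ U) :
    HasDerivAt (fun u : ℝ => iteratedDeriv k F (u * w)) (w * iteratedDeriv (k + 1) F (r * w)) r := by
  have hdiff : DifferentiableAt ℂ (iteratedDeriv k F) (r * w) := by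
    rw [iteratedDeriv_eq_iterate]
    exact ((hF.analyticOnNhd hU).iterated_deriv k _ hr).differentiableAt
  have hline : HasDerivAt (fun u : ℝ => (u : ℂ) * w) w r := by
    simpa using (hasDerivAt_id r).ofReal_comp.mul_const w
  rw [iteratedDeriv_succ, mul_comm]
  exact hdiff.hasDerivAt.comp r hline

lemma integrableOn_Ioi_of_continuousOn {E : Type*} [NormedAddCommGroup E] {h : ℝ → E}
    {a b r : ℝ} (hc : ContinuousOn h (Ioi a)) (hb : IntegrableOn h (Ioi b)) (hr : a < r) :
    IntegrableOn h (Ioi r) :=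
  (((hc.mono fun _ ht => hr.trans_le ht.1).integrableOn_compact isCompact_Icc).union hb).mono_set
    fun t ht => (le_or_gt t b).imp (fun h => ⟨le_of_lt ht, h⟩) id

lemma momentsIntegrable_of_integrableOn {g : ℝ → ℂ} {n : ℕ} {a : ℝ} (ha : a < 0)
    (hc : ContinuousOn g (Ioi a))
    (h : IntegrableOn (fun r : ℝ => (1 + r) ^ n * ‖g r‖) (Ici 0)) :
    MomentsIntegrable g n a := by
  intro j hj r hr
  have hcj : ContinuousOn (fun t : ℝ => (t : ℂ) ^ j * g t) (Ioi a) :=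
    (Complex.continuous_ofReal.pow j).continuousOn.mul hc
  refine integrableOn_Ioi_of_continuousOn (b := 0) hcj ?_ hr
  refine (h.mono_set Ioi_subset_Ici_self).mono'
    ((hcj.mono (Ioi_subset_Ioi ha.le)).aestronglyMeasurable measurableSet_Ioi) ?_
  refine (ae_restrict_iff' measurableSet_Ioi).2 (ae_of_all _ fun t (ht : 0 < t) => ?_)
  rw [norm_mul, norm_pow, Complex.norm_of_nonneg ht.le]
  gcongr
  calc t ^ j ≤ (1 + t) ^ j := by gcongr; linarith
    _ ≤ (1 + t) ^ n := pow_le_pow_right₀ (by linarith) hj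

lemma integrableOn_const_mul_of_norm {h : ℝ → ℂ} {s : Set ℝ} (hs : MeasurableSet s)
    (hc : ContinuousOn h s) (hn : IntegrableOn (fun r => ‖h r‖) s) (c : ℂ) :
    IntegrableOn (fun r => c * h r) s :=
  ((integrable_norm_iff (hc.aestronglyMeasurable hs)).1 hn).const_mul c

lemma integral_Ioi_comp_add_right {E : Type*} [NormedAddCommGroup E] [NormedSpace ℝ E]
    (g : ℝ → E) (r : ℝ) : ∫ s in Ioi 0, g (s + r) = ∫ t in Ioi r, g t := by
  simpa using (measurePreserving_add_right volume r).setIntegral_preimage_emb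
    (measurableEmbedding_addRight r) g (Ioi r)

section Ray

variable {f : ℂ → ℂ} {k : ℕ} {a r : ℝ}

lemma phiRep_ofReal_mul_e4 (f : ℂ → ℂ) (k : ℕ) (r : ℝ) :
    phiRep f k (r * e4) = e4 ^ (k + 1) / k.factorial * tailMoment (fun t => f (t * e4)) k r := by
  have h : ∀ s : ℝ, e4 * (((s : ℂ) * e4) ^ k * f (r * e4 + s * e4)) =
      e4 ^ (k + 1) * ((((s + r : ℝ) : ℂ) - r) ^ k * f ((s + r : ℝ) * e4)) := fun s => by
    push_cast
    ring_nf
  simp_rw [phiRep, h, integral_const_mul,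
    integral_Ioi_comp_add_right (fun t : ℝ => ((t : ℂ) - r) ^ k * f (t * e4)), tailMoment]
  ring

lemma hasDerivAt_phiRep_zero_ofReal_mul_e4 (hc : ContinuousOn (fun t : ℝ => f (t * e4)) (Ioi a))
    (hf : MomentsIntegrable (fun t : ℝ => f (t * e4)) 0 a) (hr : a < r) :
    HasDerivAt (fun u : ℝ => phiRep f 0 (u * e4)) (-(e4 * f (r * e4))) r := by
  simp_rw [phiRep_ofReal_mul_e4]
  simpa using (hasDerivAt_tailMoment_zero hc hf hr).const_mul e4

lemma hasDerivAt_phiRep_succ_ofReal_mul_e4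
    (hc : ContinuousOn (fun t : ℝ => f (t * e4)) (Ioi a))
    (hf : MomentsIntegrable (fun t : ℝ => f (t * e4)) (k + 1) a) (hr : a < r) :
    HasDerivAt (fun u : ℝ => phiRep f (k + 1) (u * e4)) (-(e4 * phiRep f k (r * e4))) r := by
  simp_rw [phiRep_ofReal_mul_e4]
  refine ((hasDerivAt_tailMoment_succ hc hf hr).const_mul _).congr_deriv ?_
  rw [Nat.factorial_succ]
  generalize tailMoment _ k r = T
  push_cast
  field_simp
  ring

lemma continuousOn_phiRep_ofReal_mul_e4 (hc : ContinuousOn (fun t : ℝ => f (t * e4)) (Ioi a))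
    (hf : MomentsIntegrable (fun t : ℝ => f (t * e4)) k a) :
    ContinuousOn (fun u : ℝ => phiRep f k (u * e4)) (Ioi a) := by
  simp_rw [phiRep_ofReal_mul_e4]
  exact continuousOn_const.mul (continuousOn_tailMoment hc hf)

end Ray

/-- integration by parts via Cauchy's formula for repeated integration. -/
theorem stmt_2 (n : ℕ) (U : Set ℂ) (hU : IsOpen U) (hray : ray ⊆ U)
    (F f : ℂ → ℂ) (hF : DifferentiableOn ℂ F U) (hf : DifferentiableOn ℂ f U)
    (h1 : IntegrableOn
      (fun r : ℝ => (1 + r) ^ n * ‖f ((r : ℂ) * e4)‖) (Set.Ici 0))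
    (h2 : IntegrableOn
      (fun r : ℝ => ‖F ((r : ℂ) * e4) * f ((r : ℂ) * e4)‖) (Set.Ici 0))
    (h3 : IntegrableOn (fun r : ℝ =>
      ‖iteratedDeriv (n + 1) F ((r : ℂ) * e4) * phiRep f n ((r : ℂ) * e4)‖)
      (Set.Ici 0))
    (h4 : ∀ k ≤ n,
      Filter.Tendsto (fun r : ℝ => iteratedDeriv k F ((r : ℂ) * e4) * phiRep f k ((r : ℂ) * e4))
        Filter.atTop (nhds 0)) :
    (∫ r in Set.Ioi (0 : ℝ), e4 * (F ((r : ℂ) * e4) * f ((r : ℂ) * e4))) =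
      (∑ k ∈ Finset.range (n + 1), iteratedDeriv k F 0 * phiRep f k 0) +
        ∫ r in Set.Ioi (0 : ℝ),
          e4 * (iteratedDeriv (n + 1) F ((r : ℂ) * e4) * phiRep f n ((r : ℂ) * e4)) := by
  obtain ⟨a, ha, hmem⟩ := exists_neg_forall_ofReal_mul_mem hU fun r hr => hray ⟨r, hr, rfl⟩
  have hc : ContinuousOn (fun t : ℝ => f (t * e4)) (Ioi a) :=
    hf.continuousOn.comp (by fun_prop) hmem
  have hmom := momentsIntegrable_of_integrableOn ha hc h1
  have hA : ∀ k, ∀ r ∈ Ioi a, HasDerivAt (fun u : ℝ => iteratedDeriv k F (u * e4))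
      (e4 * iteratedDeriv (k + 1) F (r * e4)) r :=
    fun k r hr => hasDerivAt_iteratedDeriv_ofReal_mul hU hF k (hmem r hr)
  have hG : ∀ r ∈ Ici (0 : ℝ), HasDerivAt
      (fun u : ℝ => ∑ k ∈ Finset.range (n + 1), iteratedDeriv k F (u * e4) * phiRep f k (u * e4))
      (e4 * (iteratedDeriv (n + 1) F (r * e4) * phiRep f n (r * e4))
        - e4 * (F (r * e4) * f (r * e4))) r := fun r hr =>
    have hr : a < r := ha.trans_le hr
    (hasDerivAt_sum_mul_of_chain n (fun k _ => hA k r hr)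
      (hasDerivAt_phiRep_zero_ofReal_mul_e4 hc (hmom.mono n.zero_le) hr)
      (fun k hk => hasDerivAt_phiRep_succ_ofReal_mul_e4 hc (hmom.mono hk) hr)).congr_deriv
      (by rw [iteratedDeriv_zero, mul_sub])
  have hpos : Ioi (0 : ℝ) ⊆ Ioi a := Ioi_subset_Ioi ha.le
  have hrem : IntegrableOn (fun r : ℝ =>
      e4 * (iteratedDeriv (n + 1) F (r * e4) * phiRep f n (r * e4))) (Ioi 0) :=
    integrableOn_const_mul_of_norm measurableSet_Ioi
      (ContinuousOn.mul (fun r hr => (hA (n + 1) r (hpos hr)).continuousAt.continuousWithinAt)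
        ((continuousOn_phiRep_ofReal_mul_e4 hc hmom).mono hpos))
      (h3.mono_set Ioi_subset_Ici_self) e4
  have hmain : IntegrableOn (fun r : ℝ => e4 * (F (r * e4) * f (r * e4))) (Ioi 0) :=
    integrableOn_const_mul_of_norm measurableSet_Ioi
      ((hF.continuousOn.comp (by fun_prop) fun r hr => hmem r (hpos hr)).mul (hc.mono hpos))
      (h2.mono_set Ioi_subset_Ici_self) e4
  have hFTC := integral_Ioi_of_hasDerivAt_of_tendsto' hG (hrem.sub hmain)
    (tendsto_finsetSum _ fun k hk => h4 k (Finset.mem_range_succ_iff.1 hk))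
  rw [integral_sub hrem hmain, Finset.sum_const_zero] at hFTC
  simp only [Complex.ofReal_zero, zero_mul] at hFTC
  linear_combination -hFTC
end
end

section
/- Let t > 1, 0 < δ < 1, Λ ≥ 0, and λ_c := t^{δ−1}/(1−t^{δ−1}). Suppose ζ is holomorphic on an open set U ⊆ ℂ, its values avoid the sets (−∞, −1/λ_c] and [1, ∞), and for every u ∈ U it satisfies λ_c ζ(u)·[ln(1+Λ) + Log(1+λ_c ζ(u)) − Log(1−ζ(u))] + Log(1+λ_c ζ(u)) + λ_c·Log(1−ζ(u)) = (λ_c/2)(1+λ_c)·u² + λ_c·ln(1+Λ)·u. Then at every u ∈ U where ln(1+Λ) + Log(1+λ_c ζ(u)) − Log(1−ζ(u)) ≠ 0, one has ζ′(u) = (ln(1+Λ) + (1+λ_c)·u) / (ln(1+Λ) + Log(1+λ_c ζ(u)) − Log(1−ζ(u))). -/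
/-!
Write `G(z) = L + Log(1 + λz) - Log(1 - z)` and let `F(z)` be the left-hand side of the functional
equation as a function of `z = ζ(u)`. Differentiating, the terms coming from the logarithms cancel:
`λz·(λ/(1+λz) + 1/(1-z)) + λ/(1+λz) - λ/(1-z) = 0`, so `F' = λ·G`. The chain rule applied to
`F ∘ ζ = (λ/2)(1+λ)u² + λLu` then gives `λ·G(ζ u)·ζ'(u) = λ(L + (1+λ)u)`, and `λ ≠ 0`.
-/

open MeasureTheory

noncomputable section

/-- `λ_c := t^(δ-1)/(1-t^(δ-1))`. -/
def lamc (δ t : ℝ) : ℝ := t ^ (δ - 1) / (1 - t ^ (δ - 1))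

open Complex Filter Topology

lemma lamc_pos {δ t : ℝ} (ht : 1 < t) (hδ1 : δ < 1) : 0 < lamc δ t :=
  div_pos (Real.rpow_pos_of_pos (by linarith) _)
    (sub_pos.mpr (Real.rpow_lt_one_of_one_lt_of_neg ht (by linarith)))

lemma one_add_ofReal_mul_mem_slitPlane {c : ℝ} (hc : 0 < c) {z : ℂ}
    (hz : ¬(z.im = 0 ∧ z.re ≤ -1 / c)) : 1 + (c : ℂ) * z ∈ slitPlane := by
  rw [mem_slitPlane_iff]
  simp only [add_re, add_im, one_re, one_im, re_ofReal_mul, im_ofReal_mul, zero_add]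
  by_cases him : z.im = 0
  · left
    have hre : -1 / c < z.re := lt_of_not_ge fun h => hz ⟨him, h⟩
    have := (div_lt_iff₀' hc).mp hre
    linarith
  · exact Or.inr (mul_ne_zero hc.ne' him)

lemma one_sub_mem_slitPlane {z : ℂ} (hz : ¬(z.im = 0 ∧ 1 ≤ z.re)) : 1 - z ∈ slitPlane := by
  rw [mem_slitPlane_iff]
  simp only [sub_re, sub_im, one_re, one_im, zero_sub, neg_ne_zero, sub_pos]
  by_cases him : z.im = 0
  · exact Or.inl (lt_of_not_ge fun h => hz ⟨him, h⟩)
  · exact Or.inr him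

namespace FunctionalEquation

variable (c L : ℂ)

def logRatio (z : ℂ) : ℂ := L + log (1 + c * z) - log (1 - z)

def potential (z : ℂ) : ℂ := c * z * logRatio c L z + log (1 + c * z) + c * log (1 - z)

variable {c L}

theorem hasDerivAt_potential {z : ℂ} (h₁ : 1 + c * z ∈ slitPlane) (h₂ : 1 - z ∈ slitPlane) :
    HasDerivAt (potential c L) (c * logRatio c L z) z := by
  have hlog₁ : HasDerivAt (fun w => log (1 + c * w)) (c * 1 / (1 + c * z)) z :=
    (((hasDerivAt_id' z).const_mul c).const_add 1).clog h₁
  have hlog₂ : HasDerivAt (fun w => log (1 - w)) (-1 / (1 - z)) z :=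
    ((hasDerivAt_id' z).const_sub 1).clog h₂
  have hlogRatio : HasDerivAt (logRatio c L) _ z := (hlog₁.const_add L).sub hlog₂
  have hne₁ := slitPlane_ne_zero h₁
  have hne₂ := slitPlane_ne_zero h₂
  refine ((((hasDerivAt_id' z).const_mul c).mul hlogRatio).add hlog₁ |>.add (hlog₂.const_mul c)).congr_deriv ?_
  field_simp
  ring

theorem deriv_eq_of_potential_comp_eq {ζ : ℂ → ℂ} {u : ℂ} (hc : c ≠ 0)
    (hζ : DifferentiableAt ℂ ζ u) (h₁ : 1 + c * ζ u ∈ slitPlane) (h₂ : 1 - ζ u ∈ slitPlane)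
    (hG : logRatio c L (ζ u) ≠ 0)
    (heq : ∀ᶠ v in 𝓝 u, potential c L (ζ v) = c / 2 * (1 + c) * v ^ 2 + c * L * v) :
    deriv ζ u = (L + (1 + c) * u) / logRatio c L (ζ u) := by
  have hcomp : HasDerivAt (fun v => potential c L (ζ v)) (c * logRatio c L (ζ u) * deriv ζ u) u :=
    (hasDerivAt_potential h₁ h₂).comp u hζ.hasDerivAt
  have hpoly : HasDerivAt (fun v => c / 2 * (1 + c) * v ^ 2 + c * L * v)
      (c / 2 * (1 + c) * (↑2 * u ^ 1) + c * L * 1) u :=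
    ((hasDerivAt_pow 2 u).const_mul _).add ((hasDerivAt_id' u).const_mul _)
  have hderiv := hcomp.unique (hpoly.congr_of_eventuallyEq heq)
  rw [eq_div_iff hG]
  refine mul_left_cancel₀ hc ?_
  linear_combination hderiv

end FunctionalEquation

open FunctionalEquation in
theorem stmt_3_general (t δ Λ : ℝ) (ht : 1 < t) (hδ1 : δ < 1)
    (U : Set ℂ) (hU : IsOpen U) (ζ : ℂ → ℂ) (hζ : DifferentiableOn ℂ ζ U)
    (havoid1 : ∀ u ∈ U, ¬((ζ u).im = 0 ∧ (ζ u).re ≤ -1 / lamc δ t))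
    (havoid2 : ∀ u ∈ U, ¬((ζ u).im = 0 ∧ 1 ≤ (ζ u).re))
    (heq : ∀ u ∈ U,
      (lamc δ t : ℂ) * ζ u *
            ((Real.log (1 + Λ) : ℂ) + Complex.log (1 + (lamc δ t : ℂ) * ζ u) -
              Complex.log (1 - ζ u)) +
          Complex.log (1 + (lamc δ t : ℂ) * ζ u) + (lamc δ t : ℂ) * Complex.log (1 - ζ u) =
        ((lamc δ t : ℂ) / 2) * (1 + (lamc δ t : ℂ)) * u ^ 2 +
          (lamc δ t : ℂ) * (Real.log (1 + Λ) : ℂ) * u) :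
    ∀ u ∈ U,
      (Real.log (1 + Λ) : ℂ) + Complex.log (1 + (lamc δ t : ℂ) * ζ u) -
          Complex.log (1 - ζ u) ≠ 0 →
      deriv ζ u =
        ((Real.log (1 + Λ) : ℂ) + (1 + (lamc δ t : ℂ)) * u) /
          ((Real.log (1 + Λ) : ℂ) + Complex.log (1 + (lamc δ t : ℂ) * ζ u) -
            Complex.log (1 - ζ u)) := by
  intro u hu hG
  have hc := lamc_pos ht hδ1
  have hU_nhds := hU.mem_nhds hu
  exact deriv_eq_of_potential_comp_eq (ofReal_ne_zero.mpr hc.ne')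
    (hζ.differentiableAt hU_nhds) (one_add_ofReal_mul_mem_slitPlane hc (havoid1 u hu))
    (one_sub_mem_slitPlane (havoid2 u hu)) hG
    (mem_of_superset hU_nhds heq)

/-- if a holomorphic `ζ` satisfies the functional equation, then its derivative
is given by the stated formula wherever the denominator is nonzero. -/
theorem stmt_3 (t δ Λ : ℝ) (ht : 1 < t) (hδ0 : 0 < δ) (hδ1 : δ < 1) (hΛ : 0 ≤ Λ)
    (U : Set ℂ) (hU : IsOpen U) (ζ : ℂ → ℂ) (hζ : DifferentiableOn ℂ ζ U)
    (havoid1 : ∀ u ∈ U, ¬((ζ u).im = 0 ∧ (ζ u).re ≤ -1 / lamc δ t))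
    (havoid2 : ∀ u ∈ U, ¬((ζ u).im = 0 ∧ 1 ≤ (ζ u).re))
    (heq : ∀ u ∈ U,
      (lamc δ t : ℂ) * ζ u *
            ((Real.log (1 + Λ) : ℂ) + Complex.log (1 + (lamc δ t : ℂ) * ζ u) -
              Complex.log (1 - ζ u)) +
          Complex.log (1 + (lamc δ t : ℂ) * ζ u) + (lamc δ t : ℂ) * Complex.log (1 - ζ u) =
        ((lamc δ t : ℂ) / 2) * (1 + (lamc δ t : ℂ)) * u ^ 2 +
          (lamc δ t : ℂ) * (Real.log (1 + Λ) : ℂ) * u) :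
    ∀ u ∈ U,
      (Real.log (1 + Λ) : ℂ) + Complex.log (1 + (lamc δ t : ℂ) * ζ u) -
          Complex.log (1 - ζ u) ≠ 0 →
      deriv ζ u =
        ((Real.log (1 + Λ) : ℂ) + (1 + (lamc δ t : ℂ)) * u) /
          ((Real.log (1 + Λ) : ℂ) + Complex.log (1 + (lamc δ t : ℂ) * ζ u) -
            Complex.log (1 - ζ u)) :=
  stmt_3_general t δ Λ ht hδ1 U hU ζ hζ havoid1 havoid2 heq
end
end

section
/- For all real numbers a ≥ 0 and ω ≥ 0, |∫ e^{iξ²} dξ|, where the integral is taken over the straight segment from ω to ω + a·e^{iπ/4}, is at most e^{ω²/2}·∫_{ω/√2}^{∞} e^{−p²} dp. -/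
/-!
Along the ray `ξ = ω + s e^{iπ/4}`, completing the square gives
`|e^{iξ²}| = e^{ω²/2} e^{-(s + ω/√2)²}`, so by the triangle inequality the integral is bounded by
`e^{ω²/2}` times the Gaussian integral over `[ω/√2, ω/√2 + a]`, hence by the Gaussian tail.
-/

open MeasureTheory

noncomputable section

lemma e4_eq : e4 = (Real.sqrt 2 / 2 : ℝ) + (Real.sqrt 2 / 2 : ℝ) * Complex.I := by
  rw [e4, mul_comm, Complex.exp_mul_I, ← Complex.ofReal_cos, ← Complex.ofReal_sin,
    Real.cos_pi_div_four, Real.sin_pi_div_four]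

lemma norm_e4 : ‖e4‖ = 1 := by
  simp [e4, Complex.norm_exp]

lemma re_I_mul_sq_add_mul_e4 (ω s : ℝ) :
    (Complex.I * ((ω : ℂ) + (s : ℂ) * e4) ^ 2).re = ω ^ 2 / 2 - (s + ω / Real.sqrt 2) ^ 2 := by
  have h2 : Real.sqrt 2 ^ 2 = 2 := Real.sq_sqrt zero_le_two
  simp only [e4_eq, pow_two, Complex.mul_re, Complex.mul_im, Complex.add_re, Complex.add_im,
    Complex.ofReal_re, Complex.ofReal_im, Complex.I_re, Complex.I_im]
  field_simp
  linear_combination (-4 * ω * s * Real.sqrt 2 - 2 * s ^ 2 * Real.sqrt 2 ^ 2 - 2 * ω ^ 2) * h2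

lemma norm_e4_mul_exp_I_mul_sq (ω s : ℝ) :
    ‖e4 * Complex.exp (Complex.I * ((ω : ℂ) + (s : ℂ) * e4) ^ 2)‖ =
      Real.exp (ω ^ 2 / 2) * Real.exp (-(s + ω / Real.sqrt 2) ^ 2) := by
  rw [norm_mul, norm_e4, one_mul, Complex.norm_exp, re_I_mul_sq_add_mul_e4, sub_eq_add_neg,
    Real.exp_add]

lemma intervalIntegral_le_integral_Ioi {f : ℝ → ℝ} {a b : ℝ} (hab : a ≤ b)
    (hf : IntegrableOn f (Set.Ioi a)) (hf0 : 0 ≤ᵐ[volume.restrict (Set.Ioi a)] f) :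
    ∫ x in a..b, f x ≤ ∫ x in Set.Ioi a, f x := by
  rw [intervalIntegral.integral_of_le hab]
  exact setIntegral_mono_set hf hf0 Set.Ioc_subset_Ioi_self.eventuallyLE

lemma integrableOn_exp_neg_sq (c : ℝ) :
    IntegrableOn (fun p : ℝ => Real.exp (-p ^ 2)) (Set.Ioi c) := by
  simpa using (integrable_exp_neg_mul_sq one_pos).integrableOn

theorem stmt_8_general (a ω : ℝ) (ha : 0 ≤ a) :
    ‖(∫ s in (0 : ℝ)..a, e4 * Complex.exp (Complex.I * ((ω : ℂ) + (s : ℂ) * e4) ^ 2))‖ ≤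
      Real.exp (ω ^ 2 / 2) * ∫ p in Set.Ioi (ω / Real.sqrt 2), Real.exp (-p ^ 2) := by
  calc ‖(∫ s in (0 : ℝ)..a, e4 * Complex.exp (Complex.I * ((ω : ℂ) + (s : ℂ) * e4) ^ 2))‖
      ≤ ∫ s in (0 : ℝ)..a, ‖e4 * Complex.exp (Complex.I * ((ω : ℂ) + (s : ℂ) * e4) ^ 2)‖ :=
        intervalIntegral.norm_integral_le_integral_norm ha
    _ = Real.exp (ω ^ 2 / 2) * ∫ p in ω / Real.sqrt 2..a + ω / Real.sqrt 2, Real.exp (-p ^ 2) := by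
        simp_rw [norm_e4_mul_exp_I_mul_sq, intervalIntegral.integral_const_mul,
          intervalIntegral.integral_comp_add_right (fun p => Real.exp (-p ^ 2)), zero_add]
    _ ≤ Real.exp (ω ^ 2 / 2) * ∫ p in Set.Ioi (ω / Real.sqrt 2), Real.exp (-p ^ 2) := by
        gcongr
        exact intervalIntegral_le_integral_Ioi (by linarith) (integrableOn_exp_neg_sq _)
          (.of_forall fun p => (Real.exp_pos _).le)

/-- bound on the Fresnel integral over the segment from `ω` to `ω + a·e^{iπ/4}`. -/
theorem stmt_8 (a ω : ℝ) (ha : 0 ≤ a) (hω : 0 ≤ ω) :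
    ‖(∫ s in (0 : ℝ)..a, e4 * Complex.exp (Complex.I * ((ω : ℂ) + (s : ℂ) * e4) ^ 2))‖ ≤
      Real.exp (ω ^ 2 / 2) * ∫ p in Set.Ioi (ω / Real.sqrt 2), Real.exp (-p ^ 2) :=
  stmt_8_general a ω ha
end
end

section
/- Fix 0 < δ < 1. There exists t₀ > 0, depending only on δ, such that for all t ≥ t₀, all k with 0 < k < t^{δ−1}, all λ with t^{δ−1}/(1−t^{δ−1}) ≤ λ ≤ t^{1−δ}−1, and all φ with 0 < φ < π/2 (and additionally φ < arctan(π/|ln λ|) if λ < 1), the following holds: for every R ≥ 0, with z := 1−k+R e^{iφ}, |Log z − Log(k − R e^{iφ}) + ln λ| > min(π/2 − φ, ln(t^{δ−1}/k)); moreover there exists R₀ ≥ 0 such that for all R ≥ R₀ one has |Log z − Log(k − R e^{iφ}) + ln λ| > π/2 − φ. -/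
/-!
Split the contour at `R = k cos φ`. Beyond it, `(1 - z) e^{i(π/2 - φ)}` has imaginary part
`k cos φ - R < 0`, so `arg (1 - z) < φ - π/2` while `arg z ≥ 0`: the imaginary part of `∂F/∂z`
exceeds `π/2 - φ`. Before it, `|1 - z| ≤ k` and `|z| ≥ Re z ≥ 1 - k`, so the real part is at least
`ln (λ (1 - k) / k)`, which exceeds `ln (t^{δ-1} / k)` because `λ (1 - t^{δ-1}) ≥ t^{δ-1}` and
`k < t^{δ-1} < 1` once `t > 1`.
-/

noncomputable section

open Real

/-- The second hypothesis says `Im (z e^{i(π/2 - φ)}) < 0`. -/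
theorem Complex.arg_lt_sub_pi_div_two {z : ℂ} {φ : ℝ} (hφ0 : 0 ≤ φ) (hφ : φ ≤ π / 2)
    (him : z.im < 0) (h : z.re * Real.cos φ + z.im * Real.sin φ < 0) :
    z.arg < φ - π / 2 := by
  have hz : 0 < ‖z‖ := norm_pos_iff.2 fun h0 => by simp [h0] at him
  have hc : 0 ≤ Real.cos φ := cos_nonneg_of_mem_Icc ⟨by linarith, hφ⟩
  have hs : 0 ≤ Real.sin φ := sin_nonneg_of_nonneg_of_le_pi hφ0 (by linarith [pi_pos])
  have hre : z.re < ‖z‖ * Real.sin φ := by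
    rcases lt_or_ge z.re 0 with hneg | hnonneg
    · exact hneg.trans_le (by positivity)
    · by_contra! hle
      have hnorm : ‖z‖ ^ 2 = z.re ^ 2 + z.im ^ 2 := by
        rw [Complex.sq_norm, Complex.normSq_apply]; ring
      have hsq_le := mul_self_le_mul_self (mul_nonneg hz.le hs) hle
      have hsq_lt := mul_self_lt_mul_self (mul_nonneg hnonneg hc)
        (by linarith : z.re * Real.cos φ < -z.im * Real.sin φ)
      have hnorm_sin : ‖z‖ ^ 2 * Real.sin φ ^ 2 = (z.re ^ 2 + z.im ^ 2) * Real.sin φ ^ 2 := by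
        rw [hnorm]
      have hre_sq := congrArg (z.re ^ 2 * ·) (Real.sin_sq_add_cos_sq φ)
      nlinarith
  have hbound := abs_le.1 (abs_re_div_norm_le_one z)
  have harccos : π / 2 - φ < arccos (z.re / ‖z‖) :=
    calc π / 2 - φ = arccos (Real.sin φ) := by
          rw [← Real.cos_pi_div_two_sub, arccos_cos (by linarith) (by linarith)]
      _ < arccos (z.re / ‖z‖) :=
          arccos_lt_arccos hbound.1 ((div_lt_iff₀ hz).2 (by linarith)) (sin_le_one φ)
  rw [arg_of_im_neg him]
  linarith

section Contour

variable (k lam φ R : ℝ)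

/-- `∂F/∂z = Log z - Log (1 - z) + ln λ` at the contour point `z = 1 - k + R e^{iφ}`. -/
def contourDeriv : ℂ :=
  Complex.log (((1 - k : ℝ) : ℂ) + (R : ℂ) * Complex.exp (Complex.I * (φ : ℂ))) -
    Complex.log ((k : ℂ) - (R : ℂ) * Complex.exp (Complex.I * (φ : ℂ))) + (Real.log lam : ℂ)

lemma re_add_mul_exp (x : ℝ) :
    ((x : ℂ) + R * Complex.exp (Complex.I * φ)).re = x + R * Real.cos φ := by
  simp [Complex.exp_re]

lemma im_add_mul_exp (x : ℝ) :
    ((x : ℂ) + R * Complex.exp (Complex.I * φ)).im = R * Real.sin φ := by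
  simp [Complex.exp_im]

lemma re_sub_mul_exp (x : ℝ) :
    ((x : ℂ) - R * Complex.exp (Complex.I * φ)).re = x - R * Real.cos φ := by
  simp [Complex.exp_re]

lemma im_sub_mul_exp (x : ℝ) :
    ((x : ℂ) - R * Complex.exp (Complex.I * φ)).im = -(R * Real.sin φ) := by
  simp [Complex.exp_im]

variable {k lam φ R}

lemma pi_div_two_sub_lt_norm_contourDeriv (hk : 0 ≤ k) (hφ0 : 0 < φ) (hφ : φ ≤ π / 2)
    (hR : k * Real.cos φ < R) : π / 2 - φ < ‖contourDeriv k lam φ R‖ := by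
  have hs : 0 < Real.sin φ := sin_pos_of_pos_of_lt_pi hφ0 (by linarith [pi_pos])
  have hRpos : 0 < R :=
    (mul_nonneg hk (cos_nonneg_of_mem_Icc ⟨by linarith [pi_pos], hφ⟩)).trans_lt hR
  have harg_a : 0 ≤ (((1 - k : ℝ) : ℂ) + R * Complex.exp (Complex.I * φ)).arg := by
    rw [Complex.arg_nonneg_iff, im_add_mul_exp]; positivity
  have harg_b : ((k : ℂ) - R * Complex.exp (Complex.I * φ)).arg < φ - π / 2 := by
    apply Complex.arg_lt_sub_pi_div_two hφ0.le hφ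
    · rw [im_sub_mul_exp]; nlinarith
    · rw [re_sub_mul_exp, im_sub_mul_exp]
      nlinarith [Real.sin_sq_add_cos_sq φ]
  calc π / 2 - φ < (contourDeriv k lam φ R).im := by
        simp only [contourDeriv, Complex.add_im, Complex.sub_im, Complex.log_im,
          Complex.ofReal_im, add_zero]
        linarith
    _ ≤ ‖contourDeriv k lam φ R‖ := Complex.im_le_norm _

lemma log_le_norm_contourDeriv (hk0 : 0 < k) (hk1 : k < 1) (hlam : 0 < lam) (hφ0 : 0 < φ)
    (hφ : φ < π) (hR0 : 0 ≤ R) (hR : R ≤ k * Real.cos φ) :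
    Real.log (lam * (1 - k) / k) ≤ ‖contourDeriv k lam φ R‖ := by
  set a : ℂ := ((1 - k : ℝ) : ℂ) + R * Complex.exp (Complex.I * φ)
  set b : ℂ := (k : ℂ) - R * Complex.exp (Complex.I * φ)
  have hs : 0 < Real.sin φ := sin_pos_of_pos_of_lt_pi hφ0 hφ
  have hc : 0 ≤ Real.cos φ := nonneg_of_mul_nonneg_right (hR0.trans hR) hk0
  have ha : 1 - k ≤ ‖a‖ := by
    refine le_trans ?_ (Complex.re_le_norm a)
    rw [re_add_mul_exp]
    nlinarith
  have hb_pos : 0 < ‖b‖ := by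
    refine lt_of_lt_of_le ?_ (Complex.re_le_norm b)
    rw [re_sub_mul_exp]
    nlinarith [Real.sin_sq_add_cos_sq φ, mul_pos hk0 (mul_pos hs hs)]
  have hb : ‖b‖ ≤ k := by
    have hnorm : ‖b‖ ^ 2 = k ^ 2 - R * (2 * k * Real.cos φ - R) := by
      rw [Complex.sq_norm, Complex.normSq_apply, re_sub_mul_exp, im_sub_mul_exp]
      linear_combination R ^ 2 * Real.sin_sq_add_cos_sq φ
    nlinarith
  calc Real.log (lam * (1 - k) / k) = Real.log (1 - k) - Real.log k + Real.log lam := by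
        rw [Real.log_div (by positivity) hk0.ne', Real.log_mul hlam.ne' (by linarith)]; ring
    _ ≤ Real.log ‖a‖ - Real.log ‖b‖ + Real.log lam := by
        gcongr
    _ = (contourDeriv k lam φ R).re := by
        simp only [contourDeriv, Complex.add_re, Complex.sub_re, Complex.log_re,
          Complex.ofReal_re, a, b]
    _ ≤ ‖contourDeriv k lam φ R‖ := Complex.re_le_norm _

end Contour

lemma div_lt_mul_one_sub_div {T k lam : ℝ} (hk0 : 0 < k) (hkT : k < T) (hT1 : T < 1)
    (hlam : T / (1 - T) ≤ lam) : T / k < lam * (1 - k) / k := by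
  have hTlam : T ≤ lam * (1 - T) := (div_le_iff₀ (by linarith)).1 hlam
  have hlam0 : 0 < lam := (div_pos (hk0.trans hkT) (by linarith)).trans_le hlam
  gcongr
  nlinarith

theorem stmt_12_general (δ : ℝ) (hδ1 : δ < 1) :
    ∃ t₀ > 0, ∀ t ≥ t₀, ∀ k : ℝ, 0 < k → k < t ^ (δ - 1) →
      ∀ lam : ℝ, t ^ (δ - 1) / (1 - t ^ (δ - 1)) ≤ lam → lam ≤ t ^ (1 - δ) - 1 →
      ∀ φ : ℝ, 0 < φ → φ < Real.pi / 2 →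
        (lam < 1 → φ < Real.arctan (Real.pi / |Real.log lam|)) →
        (∀ R : ℝ, 0 ≤ R →
          min (Real.pi / 2 - φ) (Real.log (t ^ (δ - 1) / k)) <
            Norm.norm
              (Complex.log (((1 - k : ℝ) : ℂ) + (R : ℂ) * Complex.exp (Complex.I * (φ : ℂ))) -
                Complex.log ((k : ℂ) - (R : ℂ) * Complex.exp (Complex.I * (φ : ℂ))) +
                (Real.log lam : ℂ))) ∧
        ∃ R₀ : ℝ, 0 ≤ R₀ ∧ ∀ R ≥ R₀,
          Real.pi / 2 - φ <
            Norm.norm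
              (Complex.log (((1 - k : ℝ) : ℂ) + (R : ℂ) * Complex.exp (Complex.I * (φ : ℂ))) -
                Complex.log ((k : ℂ) - (R : ℂ) * Complex.exp (Complex.I * (φ : ℂ))) +
                (Real.log lam : ℂ)) := by
  refine ⟨2, two_pos, fun t ht k hk0 hkT lam hlam _ φ hφ0 hφ _ => ?_⟩
  have hT0 : 0 < t ^ (δ - 1) := rpow_pos_of_pos (by linarith) _
  have hT1 : t ^ (δ - 1) < 1 := rpow_lt_one_of_one_lt_of_neg (by linarith) (by linarith)
  have hk1 : k < 1 := hkT.trans hT1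
  have hlam0 : 0 < lam := (div_pos hT0 (by linarith)).trans_le hlam
  have hc : 0 < Real.cos φ := cos_pos_of_mem_Ioo ⟨by linarith [pi_pos], hφ⟩
  have hlog : Real.log (t ^ (δ - 1) / k) < Real.log (lam * (1 - k) / k) :=
    Real.log_lt_log (div_pos hT0 hk0) (div_lt_mul_one_sub_div hk0 hkT hT1 hlam)
  refine ⟨fun R hR0 => ?_, k * Real.cos φ + 1, by positivity, fun R hR =>
    pi_div_two_sub_lt_norm_contourDeriv hk0.le hφ0 hφ.le (by linarith)⟩
  rcases le_or_gt R (k * Real.cos φ) with hR | hR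
  · exact (min_le_right _ _).trans_lt <| hlog.trans_le <|
      log_le_norm_contourDeriv hk0 hk1 hlam0 hφ0 (by linarith [pi_pos]) hR0 hR
  · exact (min_le_left _ _).trans_lt (pi_div_two_sub_lt_norm_contourDeriv hk0.le hφ0 hφ.le hR)

/-- lower bound for `|∂F/∂z|` along the contour `z = 1−k+Re^{iφ}`. -/
theorem stmt_12 (δ : ℝ) (hδ0 : 0 < δ) (hδ1 : δ < 1) :
    ∃ t₀ > 0, ∀ t ≥ t₀, ∀ k : ℝ, 0 < k → k < t ^ (δ - 1) →
      ∀ lam : ℝ, t ^ (δ - 1) / (1 - t ^ (δ - 1)) ≤ lam → lam ≤ t ^ (1 - δ) - 1 →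
      ∀ φ : ℝ, 0 < φ → φ < Real.pi / 2 →
        (lam < 1 → φ < Real.arctan (Real.pi / |Real.log lam|)) →
        (∀ R : ℝ, 0 ≤ R →
          min (Real.pi / 2 - φ) (Real.log (t ^ (δ - 1) / k)) <
            Norm.norm
              (Complex.log (((1 - k : ℝ) : ℂ) + (R : ℂ) * Complex.exp (Complex.I * (φ : ℂ))) -
                Complex.log ((k : ℂ) - (R : ℂ) * Complex.exp (Complex.I * (φ : ℂ))) +
                (Real.log lam : ℂ))) ∧
        ∃ R₀ : ℝ, 0 ≤ R₀ ∧ ∀ R ≥ R₀,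
          Real.pi / 2 - φ <
            Norm.norm
              (Complex.log (((1 - k : ℝ) : ℂ) + (R : ℂ) * Complex.exp (Complex.I * (φ : ℂ))) -
                Complex.log ((k : ℂ) - (R : ℂ) * Complex.exp (Complex.I * (φ : ℂ))) +
                (Real.log lam : ℂ)) :=
  stmt_12_general δ hδ1
end
end

section
/- Fix 0 < δ < 1 and t > 1. Let 0 < k < t^{δ−1}, let λ satisfy t^{δ−1}/(1−t^{δ−1}) ≤ λ ≤ t^{1−δ}−1, and let φ satisfy 0 < φ < π/2 (and additionally φ < arctan(π/|ln λ|) if λ < 1). Then the function R ↦ Im F(1−k+R e^{iφ}; λ) is strictly increasing on (0, ∞), and Im F(1−k+R e^{iφ}; λ) ≥ 0 for all R ≥ 0. -/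
noncomputable section

/-- `F(z;λ) := (1-z)·Log(1-z) + z·Log z + z·ln λ` (principal logarithms). -/
def Fc (lam : ℝ) (z : ℂ) : ℂ :=
  (1 - z) * Complex.log (1 - z) + z * Complex.log z + z * (Real.log lam : ℂ)

/-!
Along the contour `z(R) = 1 - k + R e^{iφ}` the derivative of `Im F` is
`G(R) = Im (e^{iφ} (Log z - Log (1 - z) + ln λ))`, and `G'(R)` has the sign of the affine function
`2k(1-k) cos φ + (2k-1) R`, which is positive at `R = 0`. So `G` increases and then possibly
decreases, hence `G ≥ min (G 0, lim G)`. Here `G 0 = sin φ · ln (λ(1-k)/k) > 0` because `k < λ(1-k)`,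
and `Log z - Log (1 - z) → iφ - i(φ - π)`, so `lim G = π cos φ + sin φ ln λ > 0` by the bound on `φ`.
Thus `Im F` is strictly increasing, and it vanishes at `R = 0`, where `z` is real in `(0, 1)`.
-/

open Complex Filter Set Topology
open scoped Real

theorem min_le_of_hasDerivAt_of_sign_change {G G' : ℝ → ℝ} {l x : ℝ}
    (hG : ∀ y, 0 ≤ y → HasDerivAt G (G' y) y)
    (hsign : ∀ x₀ > 0, (∀ y ∈ Ioo 0 x₀, 0 ≤ G' y) ∨ ∀ y ∈ Ioi x₀, G' y ≤ 0)
    (hl : Tendsto G atTop (𝓝 l)) (hx : 0 ≤ x) : min (G 0) l ≤ G x := by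
  have hcont : ContinuousOn G (Ici 0) := fun y hy => (hG y hy).continuousAt.continuousWithinAt
  rcases hx.eq_or_lt with rfl | hx
  · exact min_le_left _ _
  rcases hsign x hx with hinc | hdec
  · have hmono : MonotoneOn G (Icc 0 x) := by
      refine monotoneOn_of_hasDerivWithinAt_nonneg (convex_Icc 0 x)
        (hcont.mono Icc_subset_Ici_self) (fun y hy => (hG y ?_).hasDerivWithinAt)
        (fun y hy => hinc y ?_) <;>
      rw [interior_Icc] at hy
      exacts [hy.1.le, hy]
    exact (min_le_left _ _).trans (hmono (left_mem_Icc.2 hx.le) (right_mem_Icc.2 hx.le) hx.le)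
  · have hanti : AntitoneOn G (Ici x) := by
      refine antitoneOn_of_hasDerivWithinAt_nonpos (convex_Ici x)
        (hcont.mono (Ici_subset_Ici.2 hx.le)) (fun y hy => (hG y ?_).hasDerivWithinAt)
        (fun y hy => hdec y ?_) <;>
      rw [interior_Ici] at hy
      exacts [hx.le.trans hy.le, hy]
    refine (min_le_right _ _).trans (le_of_tendsto hl ?_)
    filter_upwards [eventually_ge_atTop x] with r hr
    exact hanti self_mem_Ici hr hr

lemma affine_nonneg_or_nonpos {A B x₀ : ℝ} (hA : 0 ≤ A) (hx₀ : 0 ≤ x₀) :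
    (∀ y ∈ Ioo 0 x₀, 0 ≤ A + B * y) ∨ ∀ y ∈ Ioi x₀, A + B * y ≤ 0 := by
  rcases le_or_gt 0 (A + B * x₀) with h | h
  · left
    intro y ⟨hy0, hy⟩
    rcases le_or_gt 0 B with hB | hB
    · positivity
    · nlinarith
  · right
    intro y (hy : x₀ < y)
    have hB : B < 0 := by nlinarith
    nlinarith

lemma Complex.hasDerivAt_mul_log {z : ℂ} (hz : z ∈ slitPlane) :
    HasDerivAt (fun u => u * log u) (log z + 1) z := by
  simpa [mul_inv_cancel₀ (slitPlane_ne_zero hz)] using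
    (hasDerivAt_id' z).fun_mul (hasDerivAt_log hz)

lemma hasDerivAt_Fc (lam : ℝ) {z : ℂ} (hz : z ∈ slitPlane) (hw : 1 - z ∈ slitPlane) :
    HasDerivAt (Fc lam) (log z - log (1 - z) + Real.log lam) z := by
  have h1 := (hasDerivAt_mul_log hw).comp z ((hasDerivAt_id z).const_sub 1)
  have h := (h1.add (hasDerivAt_mul_log hz)).add
    ((hasDerivAt_id z).mul_const (Real.log lam : ℂ))
  rw [show log z - log (1 - z) + Real.log lam
      = (log (1 - z) + 1) * -1 + (log z + 1) + 1 * Real.log lam by ring]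
  exact h

lemma exp_I_mul_ofReal_re (φ : ℝ) : (exp (I * φ)).re = Real.cos φ := by
  rw [mul_comm, exp_ofReal_mul_I_re]

lemma exp_I_mul_ofReal_im (φ : ℝ) : (exp (I * φ)).im = Real.sin φ := by
  rw [mul_comm, exp_ofReal_mul_I_im]

def contour (k φ R : ℝ) : ℂ := ((1 - k : ℝ) : ℂ) + (R : ℂ) * exp (I * φ)

def contourSlope (lam k φ R : ℝ) : ℝ :=
  (exp (I * φ) * (log (contour k φ R) - log (1 - contour k φ R) + Real.log lam)).im

section Contour

variable {lam k φ R : ℝ}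

@[simp] lemma contour_re : (contour k φ R).re = 1 - k + R * Real.cos φ := by
  simp [contour, exp_re]

@[simp] lemma contour_im : (contour k φ R).im = R * Real.sin φ := by
  simp [contour, exp_im]

lemma contour_zero : contour k φ 0 = ((1 - k : ℝ) : ℂ) := by
  simp [contour]

lemma one_sub_contour_zero : 1 - contour k φ 0 = (k : ℂ) := by
  simp [contour]

lemma contour_mem_slitPlane (hk1 : k < 1) (hφ : 0 < Real.sin φ) (hR : 0 ≤ R) :
    contour k φ R ∈ slitPlane := by
  rcases hR.eq_or_lt with rfl | hR
  · exact mem_slitPlane_iff.2 (Or.inl (by simpa using hk1))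
  · exact mem_slitPlane_iff.2 (Or.inr (by rw [contour_im]; exact mul_ne_zero hR.ne' hφ.ne'))

lemma one_sub_contour_mem_slitPlane (hk0 : 0 < k) (hφ : 0 < Real.sin φ) (hR : 0 ≤ R) :
    1 - contour k φ R ∈ slitPlane := by
  rcases hR.eq_or_lt with rfl | hR
  · exact mem_slitPlane_iff.2 (Or.inl (by simpa using hk0))
  · exact mem_slitPlane_iff.2 (Or.inr (by simp [hR.ne', hφ.ne']))

lemma hasDerivAt_contour : HasDerivAt (contour k φ) (exp (I * φ)) R := by
  unfold contour
  simpa using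
    ((hasDerivAt_id R).ofReal_comp.mul_const (exp (I * φ))).const_add ((1 - k : ℝ) : ℂ)

lemma hasDerivAt_im_Fc_contour (hk0 : 0 < k) (hk1 : k < 1) (hφ : 0 < Real.sin φ) (hR : 0 ≤ R) :
    HasDerivAt (fun R => (Fc lam (contour k φ R)).im) (contourSlope lam k φ R) R := by
  have h := (hasDerivAt_Fc lam (contour_mem_slitPlane hk1 hφ hR)
    (one_sub_contour_mem_slitPlane hk0 hφ hR)).comp R hasDerivAt_contour
  rw [mul_comm] at h
  exact imCLM.hasFDerivAt.comp_hasDerivAt R h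

lemma im_exp_sq_mul_inv_contour_mul_one_sub :
    (exp (I * φ) ^ 2 * (contour k φ R * (1 - contour k φ R))⁻¹).im
      = Real.sin φ * (2 * k * (1 - k) * Real.cos φ + (2 * k - 1) * R)
        / normSq (contour k φ R * (1 - contour k φ R)) := by
  simp only [mul_im, inv_re, inv_im, sq, mul_re, sub_re, sub_im, one_re, one_im,
    exp_I_mul_ofReal_re, exp_I_mul_ofReal_im, contour_re, contour_im]
  linear_combination ((2 * k - 1) * R * Real.sin φ) *
    (normSq (contour k φ R * (1 - contour k φ R)))⁻¹ * Real.sin_sq_add_cos_sq φ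

lemma hasDerivAt_contourSlope (hk0 : 0 < k) (hk1 : k < 1) (hφ : 0 < Real.sin φ) (hR : 0 ≤ R) :
    HasDerivAt (contourSlope lam k φ)
      (Real.sin φ * (2 * k * (1 - k) * Real.cos φ + (2 * k - 1) * R)
        / normSq (contour k φ R * (1 - contour k φ R))) R := by
  have hz := contour_mem_slitPlane hk1 hφ hR
  have hw := one_sub_contour_mem_slitPlane hk0 hφ hR
  have h := (((hasDerivAt_contour.clog_real hz).sub
    ((hasDerivAt_contour.const_sub 1).clog_real hw)).add_const (Real.log lam : ℂ)).const_mul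
    (exp (I * φ))
  rw [show exp (I * φ) * (exp (I * φ) / contour k φ R - -exp (I * φ) / (1 - contour k φ R))
      = exp (I * φ) ^ 2 * (contour k φ R * (1 - contour k φ R))⁻¹ by
    field_simp [slitPlane_ne_zero hz, slitPlane_ne_zero hw]; ring] at h
  rw [← im_exp_sq_mul_inv_contour_mul_one_sub]
  exact imCLM.hasFDerivAt.comp_hasDerivAt R h

lemma contourSlope_zero (hk0 : 0 ≤ k) (hk1 : k ≤ 1) :
    contourSlope lam k φ 0 = Real.sin φ * (Real.log lam + Real.log (1 - k) - Real.log k) := by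
  rw [contourSlope, one_sub_contour_zero, contour_zero, ← ofReal_log hk0,
    ← ofReal_log (sub_nonneg.2 hk1)]
  simp only [mul_im, exp_I_mul_ofReal_re, exp_I_mul_ofReal_im, add_re, add_im, sub_re, sub_im,
    ofReal_re, ofReal_im]
  ring

lemma tendsto_log_contour_sub_log_one_sub_contour (hφ0 : 0 < φ) (hφπ : φ < π) :
    Tendsto (fun R => log (contour k φ R) - log (1 - contour k φ R)) atTop (𝓝 (π * I)) := by
  set E := exp (I * φ) with hE
  have hsin : 0 < Real.sin φ := Real.sin_pos_of_pos_of_lt_pi hφ0 hφπ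
  have hEim : E.im = Real.sin φ := exp_I_mul_ofReal_im φ
  have hlogE : log E = φ * I := by
    rw [hE, mul_comm, log_exp] <;> simp <;> linarith
  have hlog_negE : log (-E) = (φ - π) * I := by
    rw [show -E = exp ((φ - π : ℝ) * I) by
      rw [ofReal_sub, sub_mul, exp_sub, exp_pi_mul_I, hE, mul_comm I]; ring, log_exp] <;>
      simp <;> linarith
  have hvanish (c : ℝ) : Tendsto (fun R : ℝ => ((c / R : ℝ) : ℂ)) atTop (𝓝 0) := by
    have h := (continuous_ofReal.tendsto 0).comp
      ((tendsto_const_nhds : Tendsto (fun _ : ℝ => c) atTop (𝓝 c)).div_atTop tendsto_id)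
    rwa [ofReal_zero] at h
  have hlim : Tendsto (fun R : ℝ => log (((1 - k) / R : ℝ) + E) - log ((k / R : ℝ) - E)) atTop
      (𝓝 (log E - log (-E))) :=
    ((continuousAt_clog (mem_slitPlane_iff.2 (Or.inr (by simp [hEim, hsin.ne'])))).tendsto.comp
      (by simpa using (hvanish (1 - k)).add_const E)).sub
    ((continuousAt_clog (mem_slitPlane_iff.2 (Or.inr (by simp [hEim, hsin.ne'])))).tendsto.comp
      (by simpa using (hvanish k).sub_const E))
  rw [hlogE, hlog_negE, ← sub_mul, sub_sub_cancel] at hlim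
  refine hlim.congr' ?_
  filter_upwards [eventually_gt_atTop 0] with R hR
  have hR' : (R : ℂ) ≠ 0 := ofReal_ne_zero.2 hR.ne'
  have hz : contour k φ R = R * (((1 - k) / R : ℝ) + E) := by
    simp only [contour, ofReal_div, ← hE]; field_simp
  have hw : 1 - contour k φ R = R * ((k / R : ℝ) - E) := by
    simp only [contour, ofReal_div, ofReal_sub, ofReal_one, ← hE]; field_simp; ring
  -- the two `Real.log R` terms produced by `log_ofReal_mul` cancel
  rw [hw, hz, log_ofReal_mul hR, log_ofReal_mul hR]
  · ring
  · exact fun h => by simpa [hEim, hsin.ne'] using congrArg im h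
  · exact fun h => by simpa [hEim, hsin.ne'] using congrArg im h

lemma tendsto_contourSlope (hφ0 : 0 < φ) (hφπ : φ < π) :
    Tendsto (contourSlope lam k φ) atTop (𝓝 (π * Real.cos φ + Real.sin φ * Real.log lam)) := by
  have h := (continuous_im.tendsto _).comp
    (((tendsto_log_contour_sub_log_one_sub_contour (k := k) hφ0 hφπ).add_const
      (Real.log lam : ℂ)).const_mul (exp (I * φ)))
  rwa [show (exp (I * φ) * (π * I + Real.log lam)).im
      = π * Real.cos φ + Real.sin φ * Real.log lam by
    simp only [mul_im, exp_I_mul_ofReal_re, exp_I_mul_ofReal_im, add_re, add_im, mul_re, I_re,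
      I_im, ofReal_re, ofReal_im]
    ring] at h

lemma contourSlope_pos (hk0 : 0 < k) (hk1 : k < 1) (hφ0 : 0 < φ) (hφ1 : φ < π / 2)
    (hlamk : k < lam * (1 - k)) (hinf : 0 < π * Real.cos φ + Real.sin φ * Real.log lam)
    (hR : 0 ≤ R) : 0 < contourSlope lam k φ R := by
  have hsin : 0 < Real.sin φ := Real.sin_pos_of_pos_of_lt_pi hφ0 (by linarith)
  have hcos : 0 < Real.cos φ := Real.cos_pos_of_mem_Ioo ⟨by linarith, hφ1⟩
  have hlam : 0 < lam := pos_of_mul_pos_left (hk0.trans hlamk) (by linarith)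
  have h0 : 0 < contourSlope lam k φ 0 := by
    have : Real.log k < Real.log lam + Real.log (1 - k) := by
      rw [← Real.log_mul hlam.ne' (by linarith)]
      exact Real.log_lt_log hk0 hlamk
    rw [contourSlope_zero hk0.le hk1.le]
    exact mul_pos hsin (by linarith)
  have hA : 0 ≤ 2 * k * (1 - k) * Real.cos φ := by
    have : 0 ≤ 1 - k := by linarith
    positivity
  refine (lt_min h0 hinf).trans_le (min_le_of_hasDerivAt_of_sign_change
    (fun y hy => hasDerivAt_contourSlope hk0 hk1 hsin hy) (fun x₀ hx₀ => ?_)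
    (tendsto_contourSlope hφ0 (by linarith)) hR)
  exact (affine_nonneg_or_nonpos hA hx₀.le).imp
    (fun h y hy => div_nonneg (mul_nonneg hsin.le (h y hy)) (normSq_nonneg _))
    (fun h y hy => div_nonpos_of_nonpos_of_nonneg
      (mul_nonpos_of_nonneg_of_nonpos hsin.le (h y hy)) (normSq_nonneg _))

theorem strictMonoOn_im_Fc_contour (hk0 : 0 < k) (hk1 : k < 1) (hφ0 : 0 < φ) (hφ1 : φ < π / 2)
    (hlamk : k < lam * (1 - k)) (hinf : 0 < π * Real.cos φ + Real.sin φ * Real.log lam) :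
    StrictMonoOn (fun R => (Fc lam (contour k φ R)).im) (Ici 0) := by
  have hsin : 0 < Real.sin φ := Real.sin_pos_of_pos_of_lt_pi hφ0 (by linarith)
  have hderiv R (hR : 0 ≤ R) := hasDerivAt_im_Fc_contour (lam := lam) hk0 hk1 hsin hR
  refine strictMonoOn_of_hasDerivWithinAt_pos (convex_Ici 0)
    (fun R hR => (hderiv R hR).continuousAt.continuousWithinAt)
    (fun R hR => (hderiv R ?_).hasDerivWithinAt)
    (fun R hR => contourSlope_pos hk0 hk1 hφ0 hφ1 hlamk hinf ?_) <;>
  rw [interior_Ici] at hR <;> exact le_of_lt hR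

lemma im_Fc_contour_zero (hk0 : 0 ≤ k) (hk1 : k ≤ 1) : (Fc lam (contour k φ 0)).im = 0 := by
  rw [Fc, one_sub_contour_zero, contour_zero, ← ofReal_log hk0, ← ofReal_log (sub_nonneg.2 hk1)]
  simp only [← ofReal_mul, ← ofReal_add, ofReal_im]

end Contour

lemma lt_mul_one_sub_of_div_one_sub_le {a k lam : ℝ} (hk0 : 0 < k) (hka : k < a) (ha1 : a < 1)
    (hlam : a / (1 - a) ≤ lam) : k < lam * (1 - k) := by
  have h := (div_le_iff₀ (by linarith : 0 < 1 - a)).mp hlam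
  nlinarith

lemma pi_mul_cos_add_sin_mul_log_pos {φ lam : ℝ} (hφ0 : 0 < φ) (hφ1 : φ < π / 2)
    (hφ2 : lam < 1 → φ < Real.arctan (π / |Real.log lam|)) :
    0 < π * Real.cos φ + Real.sin φ * Real.log lam := by
  have hsin : 0 < Real.sin φ := Real.sin_pos_of_pos_of_lt_pi hφ0 (by linarith)
  have hcos : 0 < Real.cos φ := Real.cos_pos_of_mem_Ioo ⟨by linarith, hφ1⟩
  rcases le_or_gt 0 (Real.log lam) with hL | hL
  · nlinarith [mul_nonneg hsin.le hL, mul_pos Real.pi_pos hcos]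
  · have hlam1 : lam < 1 := not_le.1 fun h => (Real.log_nonneg h).not_gt hL
    have htan : Real.tan φ < π / |Real.log lam| := by
      simpa [Real.tan_arctan] using Real.tan_lt_tan_of_lt_of_lt_pi_div_two (by linarith)
        (Real.arctan_lt_pi_div_two _) (hφ2 hlam1)
    rw [Real.tan_eq_sin_div_cos, abs_of_neg hL, div_lt_div_iff₀ hcos (by linarith)] at htan
    linarith

theorem stmt_14_general (δ t : ℝ) (hδ1 : δ < 1) (ht : 1 < t)
    (k lam φ : ℝ) (hk0 : 0 < k) (hk1 : k < t ^ (δ - 1))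
    (hlam1 : t ^ (δ - 1) / (1 - t ^ (δ - 1)) ≤ lam)
    (hφ0 : 0 < φ) (hφ1 : φ < Real.pi / 2)
    (hφ2 : lam < 1 → φ < Real.arctan (Real.pi / |Real.log lam|)) :
    StrictMonoOn
        (fun R : ℝ =>
          (Fc lam (((1 - k : ℝ) : ℂ) + (R : ℂ) * Complex.exp (Complex.I * (φ : ℂ)))).im)
        (Set.Ioi 0) ∧
      ∀ R : ℝ, 0 ≤ R →
        0 ≤ (Fc lam (((1 - k : ℝ) : ℂ) + (R : ℂ) * Complex.exp (Complex.I * (φ : ℂ)))).im := by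
  have ha1 : t ^ (δ - 1) < 1 := Real.rpow_lt_one_of_one_lt_of_neg ht (by linarith)
  have hk1' : k < 1 := hk1.trans ha1
  have hmono := strictMonoOn_im_Fc_contour hk0 hk1' hφ0 hφ1
    (lt_mul_one_sub_of_div_one_sub_le hk0 hk1 ha1 hlam1)
    (pi_mul_cos_add_sin_mul_log_pos hφ0 hφ1 hφ2)
  refine ⟨hmono.mono Ioi_subset_Ici_self, fun R hR => ?_⟩
  exact (im_Fc_contour_zero hk0.le hk1'.le).symm.le.trans (hmono.monotoneOn self_mem_Ici hR hR)

/-- `Im F` is strictly increasing and non-negative along the contour. -/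
theorem stmt_14 (δ t : ℝ) (hδ0 : 0 < δ) (hδ1 : δ < 1) (ht : 1 < t)
    (k lam φ : ℝ) (hk0 : 0 < k) (hk1 : k < t ^ (δ - 1))
    (hlam1 : t ^ (δ - 1) / (1 - t ^ (δ - 1)) ≤ lam) (hlam2 : lam ≤ t ^ (1 - δ) - 1)
    (hφ0 : 0 < φ) (hφ1 : φ < Real.pi / 2)
    (hφ2 : lam < 1 → φ < Real.arctan (Real.pi / |Real.log lam|)) :
    StrictMonoOn
        (fun R : ℝ =>
          (Fc lam (((1 - k : ℝ) : ℂ) + (R : ℂ) * Complex.exp (Complex.I * (φ : ℂ)))).im)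
        (Set.Ioi 0) ∧
      ∀ R : ℝ, 0 ≤ R →
        0 ≤ (Fc lam (((1 - k : ℝ) : ℂ) + (R : ℂ) * Complex.exp (Complex.I * (φ : ℂ)))).im :=
  stmt_14_general δ t hδ1 ht k lam φ hk0 hk1 hlam1 hφ0 hφ1 hφ2
end
end

section
/- For every integer N ≥ 1 there exist dyadic rational numbers A_{mn} (0 ≤ m, n ≤ N) with |A_{mn}| < (3N)! for all m,n, A_{mN} = 0 for all m < N, and A_{NN} = (−1)^N·(2N−1)!!, such that the following identity holds: for every t > 0, every λ > 0, and every complex z ∉ (−∞,0] ∪ [1,∞) at which F_z(z;λ) ≠ 0, (L^N h₀)(z) = (1−z)^{−(2N+1)/2}/((−i t)^N·F_z(z;λ)^N) · Σ_{m,n=0}^{N} A_{mn}·z^{−m}·F_z(z;λ)^{−n}, where h₀(z) := (1−z)^{−1/2}, (L h)(z) := d/dz( −h(z)/(i t·F_z(z;λ)) ), F_z(z;λ) := Log z − Log(1−z) + ln λ, and fractional powers of 1−z are defined via the principal logarithm, (1−z)^{−s} := exp(−s·Log(1−z)). -/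
noncomputable section

/-- `F_z(z;λ) = Log z − Log(1−z) + ln λ` (principal logarithms). -/
def Fz (lam : ℝ) (z : ℂ) : ℂ :=
  Complex.log z - Complex.log (1 - z) + (Real.log lam : ℂ)

/-- `h₀(z) := (1-z)^{-1/2} := exp(−Log(1−z)/2)`. -/
def h0 (z : ℂ) : ℂ := Complex.exp (-Complex.log (1 - z) / 2)

/-- `(L h)(z) := d/dz(−h(z)/(i t F_z(z;λ)))`. -/
def Lop (t lam : ℝ) (h : ℂ → ℂ) : ℂ → ℂ :=
  fun z => deriv (fun w => -h w / (Complex.I * (t : ℂ) * Fz lam w)) z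

/-!
With `x = 1/z` and `y = 1/F_z`, the functions `T_{c,m,k} = (1 - z)^c x^m y^k` are closed under
`d/dz`: since `(1 - z) F_z' = x` and `(1 - z) x = x - 1`,
`T_{c,m,k}' = (m - c) T_{c-1,m,k} - m T_{c-1,m+1,k} - k T_{c-1,m+1,k+1}`.
As `-1/(i t F_z) = y/(-i t)`, induction on `N` gives
`(-i t)^N L^N h₀ = Σ A^{(N)}_{mn} T_{-(2N+1)/2, m, N+n}`, where comparing coefficients yields a
three-term recursion for `A^{(N+1)}` in terms of `A^{(N)}`. By that recursion `A^{(N)}_{mn} = 0`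
unless `n ≤ m ≤ N`, the diagonal is multiplied by `-(2N+1)` at each step, only the factor `1/2`
enters the denominators, and the coefficients grow by at most a factor `5N + 4` per step, which
keeps them below `(3N)!`.
-/

theorem Rat.exists_den_eq_two_pow_of_dvd {q : ℚ} {j : ℕ} (h : q.den ∣ 2 ^ j) :
    ∃ k : ℕ, q.den = 2 ^ k :=
  let ⟨k, _, hk⟩ := (Nat.dvd_prime_pow Nat.prime_two).mp h
  ⟨k, hk⟩

def dyadicSubring : Subring ℚ where
  carrier := {q | ∃ j : ℕ, q.den = 2 ^ j}
  one_mem' := ⟨0, rfl⟩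
  zero_mem' := ⟨0, rfl⟩
  neg_mem' := by
    rintro q ⟨j, hj⟩
    exact ⟨j, (Rat.den_neg_eq_den q).trans hj⟩
  add_mem' := by
    rintro p q ⟨i, hi⟩ ⟨j, hj⟩
    exact Rat.exists_den_eq_two_pow_of_dvd (j := i + j)
      (by rw [pow_add, ← hi, ← hj]; exact Rat.add_den_dvd p q)
  mul_mem' := by
    rintro p q ⟨i, hi⟩ ⟨j, hj⟩
    exact Rat.exists_den_eq_two_pow_of_dvd (j := i + j)
      (by rw [pow_add, ← hi, ← hj]; exact Rat.mul_den_dvd p q)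

theorem half_mem_dyadicSubring : (1 / 2 : ℚ) ∈ dyadicSubring := ⟨1, by norm_num⟩

namespace IteratedL

open Finset

/-- `coeff N m n` is `A^{(N)}_{mn}`, the coefficient of `T_{-(2N+1)/2, m, N+n}` (`term`) in
`(-i t)^N L^N h₀`; the recursion is read off from `hasDerivAt_term`. -/
def coeff : ℕ → ℕ → ℕ → ℚ
  | 0, 0, 0 => 1
  | 0, _, _ => 0
  | N + 1, 0, n => (2 * N + 1) / 2 * coeff N 0 n
  | N + 1, m + 1, 0 => ((2 * N + 1) / 2 + (m + 1)) * coeff N (m + 1) 0 - m * coeff N m 0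
  | N + 1, m + 1, n + 1 => ((2 * N + 1) / 2 + (m + 1)) * coeff N (m + 1) (n + 1)
      - m * coeff N m (n + 1) - (N + (n + 1)) * coeff N m n

theorem coeff_zero (m n : ℕ) : coeff 0 m n = if m = 0 ∧ n = 0 then 1 else 0 := by
  rcases m with _ | m <;> rcases n with _ | n <;> simp [coeff]

theorem coeff_succ (N m n : ℕ) :
    coeff (N + 1) m n = ((2 * N + 1) / 2 + m) * coeff N m n
      - (if m = 0 then 0 else (m - 1) * coeff N (m - 1) n)
      - (if m = 0 ∨ n = 0 then 0 else (N + n) * coeff N (m - 1) (n - 1)) := by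
  rcases m with _ | m <;> rcases n with _ | n <;> simp [coeff]

theorem coeff_eq_zero {N m n : ℕ} (h : N < m ∨ m < n) : coeff N m n = 0 := by
  induction N generalizing m n with
  | zero => rw [coeff_zero, if_neg (by omega)]
  | succ N ih =>
    have h₂ (hm : m ≠ 0) : coeff N (m - 1) n = 0 := ih (by omega)
    have h₃ (hm : m ≠ 0) (hn : n ≠ 0) : coeff N (m - 1) (n - 1) = 0 := ih (by omega)
    rw [coeff_succ, ih (by omega)]
    split_ifs <;> simp_all

theorem coeff_self (N : ℕ) : coeff N N N = (-1) ^ N * ((2 * N - 1).doubleFactorial : ℚ) := by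
  induction N with
  | zero => simp [coeff]
  | succ N ih =>
    have hdf : ((2 * (N + 1) - 1).doubleFactorial : ℚ) =
        (2 * N + 1) * (2 * N - 1).doubleFactorial := by
      rw [show 2 * (N + 1) - 1 = 2 * N + 1 by omega, Nat.doubleFactorial_add_one]
      push_cast
      ring
    rw [coeff_succ, if_neg (by omega), if_neg (by omega), Nat.add_sub_cancel,
      coeff_eq_zero (by omega : N < N + 1 ∨ N + 1 < N + 1),
      coeff_eq_zero (by omega : N < N ∨ N < N + 1), ih, hdf]
    push_cast
    ring

theorem coeff_mem_dyadicSubring (N m n : ℕ) : coeff N m n ∈ dyadicSubring := by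
  induction N generalizing m n with
  | zero => rw [coeff_zero]; split_ifs <;> simp only [one_mem, zero_mem]
  | succ N ih =>
    have hhalf : ((2 * N + 1) / 2 : ℚ) = (2 * N + 1) * (1 / 2) := by ring
    rw [coeff_succ, hhalf]
    refine sub_mem (sub_mem (mul_mem (add_mem (mul_mem ?_ half_mem_dyadicSubring) ?_) (ih m n))
      ?_) ?_
    · simpa using natCast_mem dyadicSubring (2 * N + 1)
    · exact natCast_mem _ m
    · split_ifs
      · exact zero_mem _
      · exact mul_mem (sub_mem (natCast_mem _ m) (one_mem _)) (ih _ _)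
    · split_ifs
      · exact zero_mem _
      · exact mul_mem (add_mem (natCast_mem _ N) (natCast_mem _ n)) (ih _ _)

def coeffBound (N : ℕ) : ℕ := ∏ k ∈ range N, (5 * k + 4)

theorem abs_coeff_le (N m n : ℕ) : |coeff N m n| ≤ coeffBound N := by
  induction N generalizing m n with
  | zero => rw [coeff_zero]; split_ifs <;> simp [coeffBound]
  | succ N ih =>
    by_cases hmn : N + 1 < m ∨ m < n
    · rw [coeff_eq_zero hmn, abs_zero]; positivity
    have hm : (m : ℚ) ≤ N + 1 := by exact_mod_cast (by omega : m ≤ N + 1)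
    have hn : (n : ℚ) ≤ N + 1 := by exact_mod_cast (by omega : n ≤ N + 1)
    have h1 : |((2 * N + 1) / 2 + m : ℚ) * coeff N m n| ≤
        ((2 * N + 1) / 2 + m) * coeffBound N := by
      rw [abs_mul, abs_of_nonneg (by positivity)]
      exact mul_le_mul_of_nonneg_left (ih m n) (by positivity)
    have h2 : |(if m = 0 then 0 else ((m : ℚ) - 1) * coeff N (m - 1) n)| ≤
        m * coeffBound N := by
      split_ifs with h
      · simp [h]
      · have : (1 : ℚ) ≤ m := by exact_mod_cast Nat.one_le_iff_ne_zero.mpr h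
        rw [abs_mul, abs_of_nonneg (by linarith)]
        exact mul_le_mul (by linarith) (ih _ _) (abs_nonneg _) (by positivity)
    have h3 : |(if m = 0 ∨ n = 0 then 0 else ((N : ℚ) + n) * coeff N (m - 1) (n - 1))|
        ≤ (N + n) * coeffBound N := by
      split_ifs
      · rw [abs_zero]; positivity
      · rw [abs_mul, abs_of_nonneg (by positivity)]
        exact mul_le_mul_of_nonneg_left (ih _ _) (by positivity)
    rw [coeff_succ, coeffBound, prod_range_succ, ← coeffBound]
    have hB : (0 : ℚ) ≤ coeffBound N := by positivity
    refine ((abs_sub _ _).trans (add_le_add ((abs_sub _ _).trans (add_le_add h1 h2)) h3)).trans ?_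
    push_cast
    nlinarith [mul_le_mul_of_nonneg_right hm hB, mul_le_mul_of_nonneg_right hn hB]

theorem coeffBound_lt_factorial {N : ℕ} (hN : 1 ≤ N) : coeffBound N < (3 * N).factorial := by
  induction N, hN using Nat.le_induction with
  | base => decide
  | succ N hN ih =>
    rw [coeffBound, prod_range_succ, ← coeffBound,
      show 3 * (N + 1) = 3 * N + 2 + 1 by ring, Nat.factorial_succ, Nat.factorial_succ,
      Nat.factorial_succ]
    have h : 5 * N + 4 ≤ (3 * N + 2 + 1) * ((3 * N + 1 + 1) * (3 * N + 1)) := by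
      nlinarith [Nat.mul_le_mul (show 1 ≤ 3 * N + 1 + 1 by omega) (show 1 ≤ 3 * N + 1 by omega)]
    calc coeffBound N * (5 * N + 4) < (3 * N).factorial * (5 * N + 4) :=
          Nat.mul_lt_mul_of_pos_right ih (by omega)
      _ ≤ (3 * N).factorial * ((3 * N + 2 + 1) * ((3 * N + 1 + 1) * (3 * N + 1))) :=
          Nat.mul_le_mul_left _ h
      _ = _ := by ring

theorem sum_coeff_mul_range_succ (N m : ℕ) (X : ℕ → ℂ) :
    ∑ n ∈ range (N + 2), (coeff N m n : ℂ) * X n =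
      ∑ n ∈ range (N + 1), (coeff N m n : ℂ) * X n := by
  rw [sum_range_succ, coeff_eq_zero (by omega : N < m ∨ m < N + 1)]
  simp

theorem sum_sum_coeff_mul_range_succ (N : ℕ) (X : ℕ → ℕ → ℂ) :
    ∑ m ∈ range (N + 2), ∑ n ∈ range (N + 2), (coeff N m n : ℂ) * X m n =
      ∑ m ∈ range (N + 1), ∑ n ∈ range (N + 1), (coeff N m n : ℂ) * X m n := by
  have hlast : ∑ n ∈ range (N + 2), (coeff N (N + 1) n : ℂ) * X (N + 1) n = 0 :=
    sum_eq_zero fun n _ => by rw [coeff_eq_zero (Or.inl (lt_add_one N))]; simp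
  rw [sum_range_succ, hlast, add_zero]
  exact sum_congr rfl fun m _ => sum_coeff_mul_range_succ N m (X m)

theorem sum_coeff_succ_mul (N : ℕ) (T : ℕ → ℕ → ℂ) :
    ∑ m ∈ range (N + 2), ∑ n ∈ range (N + 2), (coeff (N + 1) m n : ℂ) * T m n =
      ∑ m ∈ range (N + 1), ∑ n ∈ range (N + 1), (coeff N m n : ℂ) *
        (((2 * N + 1) / 2 + m) * T m n - m * T (m + 1) n
          - (N + 1 + n) * T (m + 1) (n + 1)) := by
  have hsplit : ∑ m ∈ range (N + 2), ∑ n ∈ range (N + 2), (coeff (N + 1) m n : ℂ) * T m n =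
      ∑ m ∈ range (N + 2), ∑ n ∈ range (N + 2),
          (coeff N m n : ℂ) * (((2 * N + 1) / 2 + m) * T m n)
      - ∑ m ∈ range (N + 2), ∑ n ∈ range (N + 2),
          (if m = 0 then 0 else (coeff N (m - 1) n : ℂ) * ((m - 1) * T m n))
      - ∑ m ∈ range (N + 2), ∑ n ∈ range (N + 2),
          (if m = 0 ∨ n = 0 then 0 else (coeff N (m - 1) (n - 1) : ℂ) * ((N + n) * T m n)) := by
    simp only [← sum_sub_distrib]
    refine sum_congr rfl fun m _ => sum_congr rfl fun n _ => ?_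
    rw [coeff_succ]
    split_ifs <;> push_cast <;> ring
  have hshift_m : ∑ m ∈ range (N + 2), ∑ n ∈ range (N + 2),
      (if m = 0 then 0 else (coeff N (m - 1) n : ℂ) * ((m - 1) * T m n)) =
      ∑ m ∈ range (N + 1), ∑ n ∈ range (N + 1),
        (coeff N m n : ℂ) * (m * T (m + 1) n) := by
    rw [sum_range_succ']
    simp only [Nat.succ_ne_zero, if_false, if_true, Nat.add_sub_cancel, Nat.cast_succ,
      add_sub_cancel_right, sum_const_zero, add_zero]
    exact sum_congr rfl fun m _ => sum_coeff_mul_range_succ N m _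
  have hshift_mn : ∑ m ∈ range (N + 2), ∑ n ∈ range (N + 2),
      (if m = 0 ∨ n = 0 then 0 else (coeff N (m - 1) (n - 1) : ℂ) * ((N + n) * T m n)) =
      ∑ m ∈ range (N + 1), ∑ n ∈ range (N + 1),
        (coeff N m n : ℂ) * ((N + 1 + n) * T (m + 1) (n + 1)) := by
    rw [sum_range_succ']
    refine (add_eq_left.mpr (sum_eq_zero fun n _ => if_pos (Or.inl rfl))).trans ?_
    refine sum_congr rfl fun m _ => ?_
    rw [sum_range_succ', if_pos (Or.inr rfl), add_zero]
    refine sum_congr rfl fun n _ => ?_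
    simp only [Nat.succ_ne_zero, or_self, if_false, Nat.add_sub_cancel, Nat.cast_succ]
    ring
  rw [hsplit, hshift_m, hshift_mn, sum_sum_coeff_mul_range_succ, ← sum_sub_distrib,
    ← sum_sub_distrib]
  refine sum_congr rfl fun m _ => ?_
  rw [← sum_sub_distrib, ← sum_sub_distrib]
  exact sum_congr rfl fun n _ => by ring

open Complex

def domain (lam : ℝ) : Set ℂ := {z | z ∈ slitPlane ∧ 1 - z ∈ slitPlane ∧ Fz lam z ≠ 0}

theorem mem_domain {lam : ℝ} {z : ℂ} (hz : ¬(z.im = 0 ∧ z.re ≤ 0))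
    (hz' : ¬(z.im = 0 ∧ 1 ≤ z.re)) (hF : Fz lam z ≠ 0) : z ∈ domain lam := by
  refine ⟨mem_slitPlane_iff_not_le_zero.mpr ?_, mem_slitPlane_iff_not_le_zero.mpr ?_, hF⟩
  · rw [le_def]; simpa [and_comm] using hz
  · rw [le_def]; simpa [and_comm] using hz'

theorem hasDerivAt_Fz (lam : ℝ) {z : ℂ} (hz : z ∈ slitPlane) (hz' : 1 - z ∈ slitPlane) :
    HasDerivAt (Fz lam) (z⁻¹ + (1 - z)⁻¹) z := by
  have h := ((hasDerivAt_log hz).sub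
    ((hasDerivAt_log hz').comp z ((hasDerivAt_id z).const_sub 1))).add_const (Real.log lam : ℂ)
  exact h.congr_deriv (by ring)

theorem isOpen_domain (lam : ℝ) : IsOpen (domain lam) := by
  have hU : IsOpen {z : ℂ | z ∈ slitPlane ∧ 1 - z ∈ slitPlane} :=
    isOpen_slitPlane.inter (isOpen_slitPlane.preimage (continuous_const.sub continuous_id))
  have hF : ContinuousOn (Fz lam) {z | z ∈ slitPlane ∧ 1 - z ∈ slitPlane} := fun z hz =>
    (hasDerivAt_Fz lam hz.1 hz.2).continuousAt.continuousWithinAt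
  convert hF.isOpen_inter_preimage hU (isOpen_compl_singleton (x := 0)) using 1
  ext z
  exact and_assoc.symm

def term (lam : ℝ) (c : ℂ) (m k : ℕ) (w : ℂ) : ℂ :=
  exp (c * log (1 - w)) * w ^ (-(m : ℤ)) * Fz lam w ^ (-(k : ℤ))

theorem term_div_Fz (lam : ℝ) (c : ℂ) (m k : ℕ) (w : ℂ) :
    term lam c m k w / Fz lam w = term lam c m (k + 1) w := by
  simp only [term, zpow_neg, zpow_natCast, pow_succ, mul_inv, div_eq_mul_inv]
  ring

theorem hasDerivAt_term (lam : ℝ) (c : ℂ) (m k : ℕ) {z : ℂ} (hz : z ∈ domain lam) :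
    HasDerivAt (term lam c m k)
      ((m - c) * term lam (c - 1) m k z - m * term lam (c - 1) (m + 1) k z
        - k * term lam (c - 1) (m + 1) (k + 1) z) z := by
  obtain ⟨hz, hz', hF⟩ := hz
  have hz0 : z ≠ 0 := slitPlane_ne_zero hz
  have h1z : 1 - z ≠ 0 := slitPlane_ne_zero hz'
  have hexp : HasDerivAt (fun w => exp (c * log (1 - w)))
      (exp (c * log (1 - z)) * (c * ((1 - z)⁻¹ * -1))) z :=
    (((hasDerivAt_log hz').comp z ((hasDerivAt_id z).const_sub 1)).const_mul c).cexp
  have hzpow := hasDerivAt_zpow (-(m : ℤ)) z (Or.inl hz0)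
  have hFpow := (hasDerivAt_zpow (-(k : ℤ)) (Fz lam z) (Or.inl hF)).comp z
    (hasDerivAt_Fz lam hz hz')
  refine ((hexp.mul hzpow).mul hFpow).congr_deriv ?_
  have hexp_sub : exp ((c - 1) * log (1 - z)) = exp (c * log (1 - z)) * (1 - z)⁻¹ := by
    rw [sub_mul, one_mul, exp_sub, exp_log h1z, div_eq_mul_inv]
  simp only [term, Pi.mul_apply, Function.comp_apply, hexp_sub, Nat.cast_succ, neg_add,
    zpow_add₀ hz0, zpow_add₀ hF, zpow_sub₀ hz0, zpow_sub₀ hF, zpow_neg_one, zpow_one]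
  push_cast
  field_simp
  ring

def kernel (lam : ℝ) (N : ℕ) (w : ℂ) : ℂ :=
  ∑ m ∈ range (N + 1), ∑ n ∈ range (N + 1),
    (coeff N m n : ℂ) * term lam (-(((2 * N + 1 : ℕ) : ℂ) / 2)) m (N + n) w

theorem kernel_eq (lam : ℝ) (N : ℕ) (z : ℂ) :
    kernel lam N z = exp (-(((2 * N + 1 : ℕ) : ℂ) / 2) * log (1 - z)) / Fz lam z ^ N *
      ∑ m ∈ range (N + 1), ∑ n ∈ range (N + 1),
        (coeff N m n : ℂ) * z ^ (-(m : ℤ)) * Fz lam z ^ (-(n : ℤ)) := by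
  rw [kernel, mul_sum]
  refine sum_congr rfl fun m _ => ?_
  rw [mul_sum]
  refine sum_congr rfl fun n _ => ?_
  simp only [term, zpow_neg, zpow_natCast, pow_add, mul_inv]
  ring

theorem hasDerivAt_kernel_div_Fz (lam : ℝ) (N : ℕ) {z : ℂ} (hz : z ∈ domain lam) :
    HasDerivAt (fun w => kernel lam N w / Fz lam w) (kernel lam (N + 1) z) z := by
  set c : ℂ := -(((2 * N + 1 : ℕ) : ℂ) / 2) with hc_def
  have hfun : (fun w => kernel lam N w / Fz lam w) = fun w =>
      ∑ m ∈ range (N + 1), ∑ n ∈ range (N + 1),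
        (coeff N m n : ℂ) * term lam c m (N + 1 + n) w := by
    funext w
    simp only [kernel, sum_div, mul_div_assoc, term_div_Fz, Nat.add_right_comm N _ 1]
    rfl
  have hc : c - 1 = -(((2 * (N + 1) + 1 : ℕ) : ℂ) / 2) := by rw [hc_def]; push_cast; ring
  rw [hfun]
  refine (HasDerivAt.fun_sum fun m _ => HasDerivAt.fun_sum fun n _ =>
    (hasDerivAt_term lam c m (N + 1 + n) hz).const_mul (coeff N m n : ℂ)).congr_deriv ?_
  rw [kernel, ← hc, sum_coeff_succ_mul N fun m n => term lam (c - 1) m (N + 1 + n) z]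
  refine sum_congr rfl fun m _ => sum_congr rfl fun n _ => ?_
  have hmc : (m : ℂ) - c = (2 * N + 1) / 2 + m := by rw [hc_def]; push_cast; ring
  rw [hmc, ← Nat.add_assoc (N + 1) n 1]
  push_cast
  ring

theorem iterate_Lop_h0 (t lam : ℝ) (N : ℕ) {z : ℂ} (hz : z ∈ domain lam) :
    (Lop t lam)^[N] h0 z = ((-I * t) ^ N)⁻¹ * kernel lam N z := by
  induction N generalizing z with
  | zero =>
    simp [kernel, term, coeff, h0, div_eq_inv_mul]
  | succ N ih =>
    have heq : (fun w => -(Lop t lam)^[N] h0 w / (I * t * Fz lam w)) =ᶠ[nhds z]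
        fun w => ((-I * t) ^ (N + 1))⁻¹ * (kernel lam N w / Fz lam w) := by
      filter_upwards [(isOpen_domain lam).mem_nhds hz] with w hw
      rw [ih hw]
      ring
    rw [Function.iterate_succ_apply', Lop, heq.deriv_eq,
      ((hasDerivAt_kernel_div_Fz lam N hz).const_mul _).deriv]

end IteratedL

open IteratedL in
/-- explicit form of the `N`-fold integration-by-parts kernel `L^N h₀`. -/
theorem stmt_15 (N : ℕ) (hN : 1 ≤ N) :
    ∃ A : ℕ → ℕ → ℚ,
      (∀ m n : ℕ, ∃ j : ℕ, (A m n).den = 2 ^ j) ∧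
      (∀ m n : ℕ, m ≤ N → n ≤ N → |(A m n : ℝ)| < (Nat.factorial (3 * N) : ℝ)) ∧
      (∀ m < N, A m N = 0) ∧
      A N N = (-1) ^ N * (Nat.doubleFactorial (2 * N - 1) : ℚ) ∧
      ∀ t lam : ℝ, 0 < t → 0 < lam → ∀ z : ℂ,
        ¬(z.im = 0 ∧ z.re ≤ 0) → ¬(z.im = 0 ∧ 1 ≤ z.re) → Fz lam z ≠ 0 →
        (Lop t lam)^[N] h0 z =
          Complex.exp (-(((2 * N + 1 : ℕ) : ℂ) / 2) * Complex.log (1 - z)) /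
              ((-Complex.I * (t : ℂ)) ^ N * Fz lam z ^ N) *
            ∑ m ∈ Finset.range (N + 1), ∑ n ∈ Finset.range (N + 1),
              (A m n : ℂ) * z ^ (-(m : ℤ)) * Fz lam z ^ (-(n : ℤ)) := by
  refine ⟨coeff N, fun m n => coeff_mem_dyadicSubring N m n, fun m n _ _ => ?_,
    fun m hm => coeff_eq_zero (Or.inr hm), coeff_self N, ?_⟩
  · have h : |coeff N m n| < (3 * N).factorial :=
      (abs_coeff_le N m n).trans_lt (by exact_mod_cast coeffBound_lt_factorial hN)
    exact_mod_cast h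
  · intro t lam _ _ z hz hz' hF
    rw [iterate_Lop_h0 t lam N (mem_domain hz hz' hF), kernel_eq]
    ring
end
end

section
/- Let 0 < δ < 1, t > 1, λ > 0, and λ_c := t^{δ−1}/(1−t^{δ−1}). Then for every real ζ with 0 ≤ ζ < 1 and λ_c·ζ < 1, the series Σ_{n=2}^{∞} (t^{δ−1}/(n(n−1)))·(1 − (−λ_c)^{n−1})·ζ^n converges absolutely and F(1 − t^{δ−1}(1−ζ); λ) = F(1 − t^{δ−1}; λ) + t^{δ−1}·ln(λ/λ_c)·ζ + Σ_{n=2}^{∞} (t^{δ−1}/(n(n−1)))·(1 − (−λ_c)^{n−1})·ζ^n. -/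
noncomputable section

/-- The real-valued phase `F(x;λ) := (1−x)·ln(1−x) + x·ln x + x·ln λ`. -/
def Freal (lam x : ℝ) : ℝ :=
  (1 - x) * Real.log (1 - x) + x * Real.log x + x * Real.log lam

/-!
With `a = t^(δ-1)` and `L = λ_c = a/(1-a)` one has `1 - a(1-ζ) = (1-a)(1+Lζ)`, so
`F(1 - a(1-ζ); λ)` splits into `a·g(ζ) + (1-a)·g(-Lζ)` plus terms linear in `ζ`, where
`g(z) = (1-z)·ln(1-z) + z = Σ_{n≥2} zⁿ/(n(n-1))` is the twice-integrated geometric series.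
The identity `(1-a)·L = a` then merges the two power series into the stated one.
-/

open Real

theorem Real.hasSum_pow_div_mul_succ_of_abs_lt_one {z : ℝ} (hz : |z| < 1) :
    HasSum (fun n : ℕ => z ^ (n + 2) / (((n : ℝ) + 2) * ((n : ℝ) + 1)))
      ((1 - z) * log (1 - z) + z) := by
  have hlog := hasSum_pow_div_log_of_abs_lt_one hz
  have hshift : HasSum (fun n : ℕ => z ^ (n + 1 + 1) / ((n : ℝ) + 1 + 1))
      (-log (1 - z) - z) := by
    simpa using (hasSum_nat_add_iff' (f := fun n : ℕ => z ^ (n + 1) / ((n : ℝ) + 1)) 1).2 hlog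
  have hterm :
      (fun n : ℕ => z * (z ^ (n + 1) / ((n : ℝ) + 1)) - z ^ (n + 1 + 1) / ((n : ℝ) + 1 + 1)) =
        fun n : ℕ => z ^ (n + 2) / (((n : ℝ) + 2) * ((n : ℝ) + 1)) := by
    funext n
    field_simp
    ring
  rw [← hterm, show (1 - z) * log (1 - z) + z = z * -log (1 - z) - (-log (1 - z) - z) by ring]
  exact (hlog.mul_left z).sub hshift

section

variable {a ζ : ℝ}

theorem phase_series_term_eq_add (ha : a ≠ 1) (n : ℕ) :
    a / (((n : ℝ) + 2) * ((n : ℝ) + 1)) * (1 - (-(a / (1 - a))) ^ (n + 1)) * ζ ^ (n + 2) =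
      a * (ζ ^ (n + 2) / (((n : ℝ) + 2) * ((n : ℝ) + 1))) +
        (1 - a) * ((-(a / (1 - a) * ζ)) ^ (n + 2) / (((n : ℝ) + 2) * ((n : ℝ) + 1))) := by
  have hL : (1 - a) * (a / (1 - a)) = a := mul_div_cancel₀ a (sub_ne_zero.2 ha.symm)
  rw [← neg_mul, mul_pow, pow_succ (-(a / (1 - a)))]
  linear_combination
    (ζ ^ (n + 2) * (-(a / (1 - a))) ^ (n + 1) / (((n : ℝ) + 2) * ((n : ℝ) + 1))) * hL

theorem hasSum_phase_series (ha : a ≠ 1) (hζ : |ζ| < 1) (hLζ : |a / (1 - a) * ζ| < 1) :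
    HasSum (fun n : ℕ => a / (((n : ℝ) + 2) * ((n : ℝ) + 1)) *
        (1 - (-(a / (1 - a))) ^ (n + 1)) * ζ ^ (n + 2))
      (a * ((1 - ζ) * log (1 - ζ) + ζ) +
        (1 - a) * ((1 + a / (1 - a) * ζ) * log (1 + a / (1 - a) * ζ) - a / (1 - a) * ζ)) := by
  have hneg : |-(a / (1 - a) * ζ)| < 1 := by rwa [abs_neg]
  have h := ((hasSum_pow_div_mul_succ_of_abs_lt_one hζ).mul_left a).add
    ((hasSum_pow_div_mul_succ_of_abs_lt_one hneg).mul_left (1 - a))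
  rw [sub_neg_eq_add, ← sub_eq_add_neg] at h
  simpa only [phase_series_term_eq_add ha] using h

theorem Freal_one_sub_mul_one_sub {lam : ℝ} (hlam : lam ≠ 0) (ha0 : a ≠ 0) (ha1 : a ≠ 1)
    (hζ : ζ ≠ 1) (hLζ : 1 + a / (1 - a) * ζ ≠ 0) :
    Freal lam (1 - a * (1 - ζ)) =
      Freal lam (1 - a) + a * log (lam / (a / (1 - a))) * ζ +
        (a * ((1 - ζ) * log (1 - ζ) + ζ) +
          (1 - a) * ((1 + a / (1 - a) * ζ) * log (1 + a / (1 - a) * ζ) - a / (1 - a) * ζ)) := by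
  have h1a : 1 - a ≠ 0 := sub_ne_zero.2 ha1.symm
  have hL : (1 - a) * (a / (1 - a)) = a := mul_div_cancel₀ a h1a
  have hfactor : 1 - a * (1 - ζ) = (1 - a) * (1 + a / (1 - a) * ζ) := by
    linear_combination (-ζ) * hL
  simp only [Freal, sub_sub_cancel]
  rw [hfactor, log_mul ha0 (sub_ne_zero.2 hζ.symm), log_mul h1a hLζ,
    log_div hlam (div_ne_zero ha0 h1a), log_div ha0 h1a]
  linear_combination (ζ * (log (1 - a) + 1) + ζ * log lam) * hL

end

theorem stmt_19_general (δ t lam : ℝ) (hδ1 : δ < 1) (ht : 1 < t) (hlam : 0 < lam)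
    (ζ : ℝ) (hζ0 : 0 ≤ ζ) (hζ1 : ζ < 1) (hζ2 : lamc δ t * ζ < 1) :
    Summable (fun n : ℕ =>
        |t ^ (δ - 1) / (((n : ℝ) + 2) * ((n : ℝ) + 1)) *
          (1 - (-lamc δ t) ^ (n + 1)) * ζ ^ (n + 2)|) ∧
      Freal lam (1 - t ^ (δ - 1) * (1 - ζ)) =
        Freal lam (1 - t ^ (δ - 1)) + t ^ (δ - 1) * Real.log (lam / lamc δ t) * ζ +
          ∑' n : ℕ, t ^ (δ - 1) / (((n : ℝ) + 2) * ((n : ℝ) + 1)) *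
            (1 - (-lamc δ t) ^ (n + 1)) * ζ ^ (n + 2) := by
  have ha0 : 0 < t ^ (δ - 1) := rpow_pos_of_pos (by linarith) _
  have ha1 : t ^ (δ - 1) < 1 := rpow_lt_one_of_one_lt_of_neg ht (by linarith)
  have hLζ : 0 ≤ lamc δ t * ζ := mul_nonneg (div_pos ha0 (by linarith)).le hζ0
  have hsum := hasSum_phase_series ha1.ne ((abs_of_nonneg hζ0).trans_lt hζ1)
    ((abs_of_nonneg hLζ).trans_lt hζ2)
  refine ⟨hsum.summable.abs, ?_⟩
  rw [lamc, hsum.tsum_eq]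
  exact Freal_one_sub_mul_one_sub hlam.ne' ha0.ne' ha1.ne hζ1.ne (by unfold lamc at hLζ; linarith)

/-- Taylor expansion of `F(1 − t^{δ−1}(1−ζ); λ)` about `ζ = 0`. -/
theorem stmt_19 (δ t lam : ℝ) (hδ0 : 0 < δ) (hδ1 : δ < 1) (ht : 1 < t) (hlam : 0 < lam)
    (ζ : ℝ) (hζ0 : 0 ≤ ζ) (hζ1 : ζ < 1) (hζ2 : lamc δ t * ζ < 1) :
    Summable (fun n : ℕ =>
        |t ^ (δ - 1) / (((n : ℝ) + 2) * ((n : ℝ) + 1)) *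
          (1 - (-lamc δ t) ^ (n + 1)) * ζ ^ (n + 2)|) ∧
      Freal lam (1 - t ^ (δ - 1) * (1 - ζ)) =
        Freal lam (1 - t ^ (δ - 1)) + t ^ (δ - 1) * Real.log (lam / lamc δ t) * ζ +
          ∑' n : ℕ, t ^ (δ - 1) / (((n : ℝ) + 2) * ((n : ℝ) + 1)) *
            (1 - (-lamc δ t) ^ (n + 1)) * ζ ^ (n + 2) :=
  stmt_19_general δ t lam hδ1 ht hlam ζ hζ0 hζ1 hζ2
end
end
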